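/- arXiv:2102.12995 — 9 statements merged into one kernel-verified Lean document; each statement's English description precedes it below -/
import Mathlib

section
/- Let K be a field with an absolute value, and let C, D, X be formal power series in K[[z]] with C·X = D. If the constant coefficient C_0 = 1, and there exist real constants c, d > 0 such that |C_n| < c and |D_n| < d for all n ≥ 0, then |X_n| ≤ d·(1+c)^n for all n ≥ 0. -/
open Finset PowerSeries

theorem add_mul_sum_mul_one_add_pow (c d : ℝ) (n : ℕ) :
    d + c * ∑ j ∈ range n, d * (1 + c) ^ j = d * (1 + c) ^ n := by
  have hgeom := geom_sum_mul (1 + c) n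
  rw [← mul_sum]
  linear_combination d * hgeom

/-- Discrete Grönwall inequality. -/
theorem le_mul_one_add_pow_of_le_add_mul_sum {a : ℕ → ℝ} {c d : ℝ} (hc : 0 ≤ c)
    (ha : ∀ n, a n ≤ d + c * ∑ j ∈ range n, a j) (n : ℕ) :
    a n ≤ d * (1 + c) ^ n := by
  induction n using Nat.strong_induction_on with
  | _ n ih =>
    calc a n ≤ d + c * ∑ j ∈ range n, a j := ha n
      _ ≤ d + c * ∑ j ∈ range n, d * (1 + c) ^ j := by
        gcongr with j hj
        exact ih j (mem_range.mp hj)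
      _ = d * (1 + c) ^ n := add_mul_sum_mul_one_add_pow c d n

theorem PowerSeries.coeff_eq_coeff_mul_sub_sum {R : Type*} [CommRing R] {C : R⟦X⟧}
    (hC0 : coeff 0 C = 1) (X : R⟦X⟧) (n : ℕ) :
    coeff n X = coeff n (C * X) - ∑ j ∈ range n, coeff (n - j) C * coeff j X := by
  rw [mul_comm, coeff_mul, Nat.sum_antidiagonal_eq_sum_range_succ
    (fun i j => coeff i X * coeff j C), sum_range_succ, Nat.sub_self, hC0]
  simp only [mul_comm (coeff _ X)]
  ring

theorem fast_growing_series_stmt0_general {K : Type*} [Field K] (v : AbsoluteValue K ℝ)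
    (C D X : PowerSeries K) (h : C * X = D)
    (hC0 : PowerSeries.coeff 0 C = 1)
    (c d : ℝ)
    (hC : ∀ n : ℕ, v (PowerSeries.coeff n C) < c)
    (hD : ∀ n : ℕ, v (PowerSeries.coeff n D) < d) :
    ∀ n : ℕ, v (PowerSeries.coeff n X) ≤ d * (1 + c) ^ n := by
  refine le_mul_one_add_pow_of_le_add_mul_sum ((v.nonneg _).trans (hC 0).le) fun n => ?_
  rw [coeff_eq_coeff_mul_sub_sum hC0, h, mul_sum]
  calc v (coeff n D - ∑ j ∈ range n, coeff (n - j) C * coeff j X)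
      ≤ v (coeff n D) + ∑ j ∈ range n, v (coeff (n - j) C * coeff j X) :=
        (v.sub_le_add _ _).trans (add_le_add_right (v.sum_le _ _) _)
    _ ≤ d + ∑ j ∈ range n, c * v (coeff j X) := by
      gcongr with j
      · exact (hD n).le
      · rw [v.map_mul]
        exact mul_le_mul_of_nonneg_right (hC _).le (v.nonneg _)

theorem fast_growing_series_stmt0 {K : Type*} [Field K] (v : AbsoluteValue K ℝ)
    (C D X : PowerSeries K) (h : C * X = D)
    (hC0 : PowerSeries.coeff 0 C = 1)
    (c d : ℝ) (hc : 0 < c) (hd : 0 < d)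
    (hC : ∀ n : ℕ, v (PowerSeries.coeff n C) < c)
    (hD : ∀ n : ℕ, v (PowerSeries.coeff n D) < d) :
    ∀ n : ℕ, v (PowerSeries.coeff n X) ≤ d * (1 + c) ^ n :=
  fast_growing_series_stmt0_general v C D X h hC0 c d hC hD
end

section
/- Let K be a field with an absolute value, and let C, D, X ∈ K[[z]] with C·X = D. If C_0 = 1 and there exist c, d, r > 0 such that |C_n| < c·r^n and |D_n| < d·r^n for all n, then |X_n| ≤ d·(1+c)^n·r^n for all n. -/
/-!
Comparing coefficients in `C * X = D` with `C₀ = 1` gives `Xₙ = Dₙ - ∑_{k=1}^n Cₖ Xₙ₋ₖ`, so by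
strong induction `|Xₙ|` is dominated by the solution of the majorant recursion
`Bₙ = d rⁿ + ∑_{k=1}^n c rᵏ Bₙ₋ₖ`, which is `Bₙ = d (1 + c)ⁿ rⁿ` by the geometric sum formula.
-/

open Finset
open scoped PowerSeries

theorem pow_add_sum_eq_one_add_pow_mul_pow {R : Type*} [CommSemiring R] (c r : R) (n : ℕ) :
    r ^ n + ∑ i ∈ range n, c * r ^ (i + 1) * ((1 + c) ^ (n - (i + 1)) * r ^ (n - (i + 1))) =
      (1 + c) ^ n * r ^ n := by
  have hterm : ∀ i ∈ range n, c * r ^ (i + 1) * ((1 + c) ^ (n - (i + 1)) * r ^ (n - (i + 1))) =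
      r ^ n * ((1 + c) ^ (n - 1 - i) * c) := by
    intro i hi
    have hi : i + 1 ≤ n := mem_range.mp hi
    rw [Nat.sub_sub, add_comm 1 i, ← pow_mul_pow_sub r hi]
    ring
  rw [sum_congr rfl hterm, ← mul_sum, ← sum_mul, sum_range_reflect (fun j => (1 + c) ^ j) n,
    add_comm 1 c, ← geom_sum_mul_add c n]
  ring

namespace PowerSeries

theorem coeff_mul_eq_add_sum_of_coeff_zero_eq_one {R : Type*} [Semiring R] {C : R⟦X⟧}
    (hC0 : coeff 0 C = 1) (X : R⟦X⟧) (n : ℕ) :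
    coeff n (C * X) = coeff n X + ∑ i ∈ range n, coeff (i + 1) C * coeff (n - (i + 1)) X := by
  rw [coeff_mul, Nat.sum_antidiagonal_eq_sum_range_succ (fun i j => coeff i C * coeff j X),
    sum_range_succ', hC0, one_mul, Nat.sub_zero, add_comm]

theorem abv_coeff_le_of_mul_eq {R : Type*} [Ring R] (v : AbsoluteValue R ℝ)
    {C D X : R⟦X⟧} (h : C * X = D) (hC0 : coeff 0 C = 1) {c d r : ℝ}
    (hC : ∀ n, 0 < n → v (coeff n C) ≤ c * r ^ n) (hD : ∀ n, v (coeff n D) ≤ d * r ^ n)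
    (n : ℕ) : v (coeff n X) ≤ d * (1 + c) ^ n * r ^ n := by
  induction n using Nat.strong_induction_on with
  | _ n ih =>
    have hrec :
        coeff n X = coeff n D - ∑ i ∈ range n, coeff (i + 1) C * coeff (n - (i + 1)) X := by
      rw [← h, coeff_mul_eq_add_sum_of_coeff_zero_eq_one hC0, add_sub_cancel_right]
    have hterm : ∀ i ∈ range n, v (coeff (i + 1) C * coeff (n - (i + 1)) X) ≤
        c * r ^ (i + 1) * (d * (1 + c) ^ (n - (i + 1)) * r ^ (n - (i + 1))) := by
      intro i hi
      have hCi := hC (i + 1) i.succ_pos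
      rw [v.map_mul]
      exact mul_le_mul hCi (ih _ (by grind)) (v.nonneg _) ((v.nonneg _).trans hCi)
    calc v (coeff n X)
        ≤ v (coeff n D) + ∑ i ∈ range n, v (coeff (i + 1) C * coeff (n - (i + 1)) X) := by
          rw [hrec]; exact (v.sub_le_add _ _).trans (add_le_add le_rfl (v.sum_le _ _))
      _ ≤ d * r ^ n + ∑ i ∈ range n,
            c * r ^ (i + 1) * (d * (1 + c) ^ (n - (i + 1)) * r ^ (n - (i + 1))) :=
          add_le_add (hD n) (sum_le_sum hterm)
      _ = d * (1 + c) ^ n * r ^ n := by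
          rw [mul_assoc, ← pow_add_sum_eq_one_add_pow_mul_pow c r n, mul_add, mul_sum]
          congr 1
          exact sum_congr rfl fun i _ => by ring

end PowerSeries

theorem fast_growing_series_stmt1_general {K : Type*} [Field K] (v : AbsoluteValue K ℝ)
    (C D X : PowerSeries K) (h : C * X = D)
    (hC0 : PowerSeries.coeff 0 C = 1)
    (c d r : ℝ)
    (hC : ∀ n : ℕ, v (PowerSeries.coeff n C) < c * r ^ n)
    (hD : ∀ n : ℕ, v (PowerSeries.coeff n D) < d * r ^ n) :
    ∀ n : ℕ, v (PowerSeries.coeff n X) ≤ d * (1 + c) ^ n * r ^ n :=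
  PowerSeries.abv_coeff_le_of_mul_eq v h hC0 (fun n _ => (hC n).le) (fun n => (hD n).le)

theorem fast_growing_series_stmt1 {K : Type*} [Field K] (v : AbsoluteValue K ℝ)
    (C D X : PowerSeries K) (h : C * X = D)
    (hC0 : PowerSeries.coeff 0 C = 1)
    (c d r : ℝ) (hc : 0 < c) (hd : 0 < d) (hr : 0 < r)
    (hC : ∀ n : ℕ, v (PowerSeries.coeff n C) < c * r ^ n)
    (hD : ∀ n : ℕ, v (PowerSeries.coeff n D) < d * r ^ n) :
    ∀ n : ℕ, v (PowerSeries.coeff n X) ≤ d * (1 + c) ^ n * r ^ n :=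
  fast_growing_series_stmt1_general v C D X h hC0 c d r hC hD
end

section
/- Let K be a field with an absolute value. Say a power series C ∈ K[[z]] exhibits exponential growth if there exists r > 0 with |C_n| = O(r^n) as n → ∞. If X ∈ K[[z]] does not exhibit exponential growth (i.e., exhibits superexponential growth), then X is not the quotient of two series exhibiting exponential growth: there do not exist C, D ∈ K[[z]], with C ≠ 0, both exhibiting exponential growth, such that C·X = D. -/
/-! Writing `C = X ^ m * U` with `U(0) ≠ 0`, the relation `C * X = D` shows that `U * X` is `D`
shifted down by `m`, so it grows at most exponentially. Hence so does `X = U⁻¹ * (U * X)`: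
exponential growth is preserved by products (the coefficient sums have `n + 1` terms), and
by inverting a series with nonzero constant term, where the recursion for the coefficients
of `U⁻¹` is dominated by a geometric series. -/

/-- A power series exhibits exponential growth (w.r.t. an absolute value `v`) if its
coefficients are `O(r^n)` for some `r > 0`. -/
def ExponentialGrowth {K : Type*} [Field K] (v : AbsoluteValue K ℝ)
    (C : PowerSeries K) : Prop :=
  ∃ M r : ℝ, 0 < M ∧ 0 < r ∧ ∀ n : ℕ, v (PowerSeries.coeff n C) ≤ M * r ^ n

open PowerSeries Finset Finset.Nat

namespace ExponentialGrowth

variable {K : Type*} [Field K] {v : AbsoluteValue K ℝ}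

theorem of_X_pow_mul {F : K⟦X⟧} (m : ℕ) (h : ExponentialGrowth v (X ^ m * F)) :
    ExponentialGrowth v F := by
  obtain ⟨M, r, hM, hr, hb⟩ := h
  refine ⟨M * r ^ m, r, by positivity, hr, fun n => ?_⟩
  have hnm := hb (n + m)
  rw [coeff_X_pow_mul] at hnm
  exact hnm.trans_eq (by ring)

theorem mul {F G : K⟦X⟧} (hF : ExponentialGrowth v F) (hG : ExponentialGrowth v G) :
    ExponentialGrowth v (F * G) := by
  obtain ⟨M, r, hM, hr, hFb⟩ := hF
  obtain ⟨N, s, hN, hs, hGb⟩ := hG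
  set t := max r s
  refine ⟨M * N, 2 * t, by positivity, by positivity, fun n => ?_⟩
  have hterm (p : ℕ × ℕ) (hp : p ∈ antidiagonal n) :
      v (coeff p.1 F * coeff p.2 G) ≤ M * N * t ^ n := by
    rw [map_mul, ← mem_antidiagonal.mp hp, pow_add, mul_mul_mul_comm]
    gcongr
    · exact (hFb _).trans (by gcongr; exact le_max_left r s)
    · exact (hGb _).trans (by gcongr; exact le_max_right r s)
  calc v (coeff n (F * G))
      ≤ ∑ p ∈ antidiagonal n, v (coeff p.1 F * coeff p.2 G) := by
        rw [coeff_mul]; exact v.sum_le _ _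
    _ ≤ (n + 1) * (M * N * t ^ n) := by
        simpa using sum_le_sum hterm
    _ ≤ 2 ^ n * (M * N * t ^ n) := by
        gcongr; exact_mod_cast Nat.lt_two_pow_self
    _ = M * N * (2 * t) ^ n := by ring

theorem inv {U : K⟦X⟧} (hU : ExponentialGrowth v U) (h0 : constantCoeff U ≠ 0) :
    ExponentialGrowth v U⁻¹ := by
  obtain ⟨M, r, hM, hr, hb⟩ := hU
  set a := v (constantCoeff U)
  have ha : 0 < a := v.pos h0
  set q := M / a
  -- `q * ∑_{j ≤ n} (1 + q) ^ j = (1 + q) ^ (n + 1) - 1` makes `a⁻¹ * (r * (1 + q)) ^ n` inductive.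
  refine ⟨a⁻¹, r * (1 + q), by positivity, by positivity, fun n => ?_⟩
  induction n using Nat.strong_induction_on with
  | _ n ih =>
  cases n with
  | zero => simp [a]
  | succ n =>
    have hrec : constantCoeff U * coeff (n + 1) U⁻¹ =
        -∑ p ∈ antidiagonal n, coeff (p.1 + 1) U * coeff p.2 U⁻¹ := by
      have := congrArg (coeff (n + 1)) (PowerSeries.mul_inv_cancel U h0)
      rw [coeff_mul, sum_antidiagonal_succ, coeff_one, if_neg n.succ_ne_zero] at this
      simpa [eq_neg_iff_add_eq_zero] using this
    have hterm (p : ℕ × ℕ) (hp : p ∈ antidiagonal n) :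
        v (coeff (p.1 + 1) U * coeff p.2 U⁻¹) ≤ r ^ (n + 1) * (q * (1 + q) ^ p.2) := by
      have hp' := mem_antidiagonal.mp hp
      rw [map_mul]
      calc v (coeff (p.1 + 1) U) * v (coeff p.2 U⁻¹)
          ≤ M * r ^ (p.1 + 1) * (a⁻¹ * (r * (1 + q)) ^ p.2) :=
            mul_le_mul (hb _) (ih _ (by omega)) (v.nonneg _) (by positivity)
        _ = r ^ (n + 1) * (q * (1 + q) ^ p.2) := by
            rw [← hp', mul_pow]; simp only [q, div_eq_mul_inv]; ring
    have hgeom : q * ∑ p ∈ antidiagonal n, (1 + q) ^ p.2 = (1 + q) ^ (n + 1) - 1 := by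
      rw [← sum_antidiagonal_swap]
      simp only [Prod.snd_swap]
      rw [sum_antidiagonal_eq_sum_range_succ_mk]
      simpa [mul_comm] using geom_sum_mul (1 + q) (n + 1)
    rw [← mul_le_mul_iff_right₀ ha]
    calc a * v (coeff (n + 1) U⁻¹)
        = v (∑ p ∈ antidiagonal n, coeff (p.1 + 1) U * coeff p.2 U⁻¹) := by
          rw [← map_mul, hrec, v.map_neg]
      _ ≤ r ^ (n + 1) * (q * ∑ p ∈ antidiagonal n, (1 + q) ^ p.2) := by
          rw [mul_sum, mul_sum]
          exact (v.sum_le _ _).trans (sum_le_sum hterm)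
      _ ≤ r ^ (n + 1) * (1 + q) ^ (n + 1) := by
          rw [hgeom]; gcongr; linarith
      _ = a * (a⁻¹ * (r * (1 + q)) ^ (n + 1)) := by
          rw [mul_inv_cancel_left₀ ha.ne', mul_pow]

end ExponentialGrowth

theorem fast_growing_series_stmt2 {K : Type*} [Field K] (v : AbsoluteValue K ℝ)
    (X : PowerSeries K) (hX : ¬ ExponentialGrowth v X) :
    ¬ ∃ C D : PowerSeries K, C ≠ 0 ∧ ExponentialGrowth v C ∧ ExponentialGrowth v D ∧
      C * X = D := by
  rintro ⟨C, D, hC0, hC, hD, rfl⟩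
  set U := divXPowOrder C
  have hU0 : constantCoeff U ≠ 0 := constantCoeff_divXPowOrder_eq_zero_iff.not.mpr hC0
  have hCU : C = PowerSeries.X ^ C.order.toNat * U := X_pow_order_mul_divXPowOrder.symm
  rw [hCU] at hC hD
  have hUX : ExponentialGrowth v (U * X) := (mul_assoc _ U X ▸ hD).of_X_pow_mul _
  apply hX
  simpa [← mul_assoc, PowerSeries.inv_mul_cancel U hU0] using
    (hC.of_X_pow_mul _).inv hU0 |>.mul hUX
end

section
/- The formal power series X = Σ_{n≥0} n!·z^n in ℂ[[z]] is irrational over the ring R of power series exhibiting exponential growth: there do not exist C, D ∈ R with C ≠ 0 and C·X = D. -/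
/-- A power series over `ℂ` exhibits exponential growth if its coefficients are
`O(r^n)` for some `r > 0`. -/
def ExponentialGrowthC (C : PowerSeries ℂ) : Prop :=
  ∃ M r : ℝ, 0 < M ∧ 0 < r ∧ ∀ n : ℕ, ‖PowerSeries.coeff n C‖ ≤ M * r ^ n

/-!
Write `F = ∑ n! zⁿ` and suppose `C * F = D` with `‖cₙ‖, ‖dₙ‖ ≤ M rⁿ`. Comparing coefficients of
`z^(m+1)` gives `c₀ (m+1)! = d_{m+1} - ∑_{i+j=m} c_{i+1} j!`. Since `i! j! ≤ m!`, the sum is at most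
`M r eʳ m!`, and so is `‖d_{m+1}‖`; dividing by `m!` yields `(m+1) ‖c₀‖ ≤ 2 M r eʳ` for every `m`,
so `c₀ = 0`. Then `C = z C'`, and `C'` satisfies the same hypotheses with `M` replaced by `M r`, so
all coefficients of `C` vanish.
-/

open Finset PowerSeries
open scoped Nat

theorem ExponentialGrowthC.exists_common_bound {C D : PowerSeries ℂ} (hC : ExponentialGrowthC C)
    (hD : ExponentialGrowthC D) : ∃ M r : ℝ, 0 ≤ r ∧
      (∀ n, ‖coeff n C‖ ≤ M * r ^ n) ∧ ∀ n, ‖coeff n D‖ ≤ M * r ^ n := by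
  obtain ⟨M₁, r₁, hM₁, hr₁, hC⟩ := hC
  obtain ⟨M₂, r₂, hM₂, hr₂, hD⟩ := hD
  refine ⟨max M₁ M₂, max r₁ r₂, hr₁.le.trans (le_max_left _ _), fun n => ?_, fun n => ?_⟩
  · exact (hC n).trans (by gcongr <;> exact le_max_left _ _)
  · exact (hD n).trans (by gcongr <;> exact le_max_right _ _)

theorem Real.sum_antidiagonal_pow_mul_factorial_le {r : ℝ} (hr : 0 ≤ r) (m : ℕ) :
    ∑ p ∈ antidiagonal m, r ^ p.1 * p.2 ! ≤ Real.exp r * m ! := by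
  calc ∑ p ∈ antidiagonal m, r ^ p.1 * p.2 !
      ≤ ∑ p ∈ antidiagonal m, r ^ p.1 / p.1 ! * m ! := by
        refine sum_le_sum fun p hp => ?_
        have hfac : (p.1 ! * p.2 ! : ℝ) ≤ m ! := by
          rw [← mem_antidiagonal.mp hp]
          exact_mod_cast Nat.le_of_dvd (Nat.factorial_pos _)
            (Nat.factorial_mul_factorial_dvd_factorial_add _ _)
        rw [div_mul_eq_mul_div, le_div_iff₀ (by positivity), mul_assoc]
        gcongr
        linarith
    _ = (∑ i ∈ range (m + 1), r ^ i / i !) * m ! := by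
        rw [← sum_mul, Nat.sum_antidiagonal_eq_sum_range_succ_mk]
    _ ≤ Real.exp r * m ! := by gcongr; exact Real.sum_le_exp_of_nonneg hr _

section

variable {𝕜 : Type*} [RCLike 𝕜] {C : PowerSeries 𝕜} {M r : ℝ}

theorem PowerSeries.succ_mul_norm_coeff_zero_le_of_bounded_mul_factorial (hr : 0 ≤ r)
    (hC : ∀ n, ‖coeff n C‖ ≤ M * r ^ n)
    (hCF : ∀ n, ‖coeff n (C * mk fun n => (n ! : 𝕜))‖ ≤ M * r ^ n) (m : ℕ) :
    (m + 1 : ℝ) * ‖coeff 0 C‖ ≤ 2 * (M * r * Real.exp r) := by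
  have hMr : 0 ≤ M * r := mul_nonneg ((norm_nonneg _).trans (by simpa using hC 0)) hr
  have hsplit : coeff 0 C * (m + 1)! = coeff (m + 1) (C * mk fun n => (n ! : 𝕜)) -
      ∑ p ∈ antidiagonal m, coeff (p.1 + 1) C * p.2 ! := by
    rw [coeff_mul, Nat.sum_antidiagonal_succ]
    simp [coeff_mk]
  have hhead : ‖coeff (m + 1) (C * mk fun n => (n ! : 𝕜))‖ ≤ M * r * Real.exp r * m ! := by
    have hpow : r ^ m ≤ Real.exp r * m ! := by
      rw [← div_le_iff₀ (by positivity)]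
      exact Real.pow_div_factorial_le_exp r hr m
    calc _ ≤ M * r * r ^ m := by rw [mul_assoc, ← pow_succ']; exact hCF (m + 1)
      _ ≤ M * r * Real.exp r * m ! := by rw [mul_assoc _ (Real.exp r)]; gcongr
  have htail :
      ‖∑ p ∈ antidiagonal m, coeff (p.1 + 1) C * (p.2 ! : 𝕜)‖ ≤ M * r * Real.exp r * m ! :=
    calc _ ≤ ∑ p ∈ antidiagonal m, M * r ^ (p.1 + 1) * p.2 ! := by
          refine norm_sum_le_of_le _ fun p _ => ?_
          rw [norm_mul, RCLike.norm_natCast]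
          gcongr
          exact hC _
      _ = M * r * ∑ p ∈ antidiagonal m, r ^ p.1 * p.2 ! := by
          rw [mul_sum]
          exact sum_congr rfl fun p _ => by ring
      _ ≤ M * r * Real.exp r * m ! := by
          rw [mul_assoc _ (Real.exp r)]
          gcongr
          exact Real.sum_antidiagonal_pow_mul_factorial_le hr m
  have hbound : (m ! : ℝ) * ((m + 1) * ‖coeff 0 C‖) ≤ m ! * (2 * (M * r * Real.exp r)) :=
    calc (m ! : ℝ) * ((m + 1) * ‖coeff 0 C‖) = ‖coeff 0 C * (m + 1)!‖ := by
          rw [norm_mul, RCLike.norm_natCast, Nat.factorial_succ]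
          push_cast
          ring
      _ ≤ _ := hsplit ▸ norm_sub_le _ _
      _ ≤ m ! * (2 * (M * r * Real.exp r)) := by linarith
  exact le_of_mul_le_mul_left hbound (by positivity)

theorem PowerSeries.coeff_zero_eq_zero_of_bounded_mul_factorial (hr : 0 ≤ r)
    (hC : ∀ n, ‖coeff n C‖ ≤ M * r ^ n)
    (hCF : ∀ n, ‖coeff n (C * mk fun n => (n ! : 𝕜))‖ ≤ M * r ^ n) : coeff 0 C = 0 := by
  by_contra h
  have hpos : 0 < ‖coeff 0 C‖ := norm_pos_iff.mpr h
  obtain ⟨m, hm⟩ := exists_nat_gt (2 * (M * r * Real.exp r) / ‖coeff 0 C‖)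
  have := succ_mul_norm_coeff_zero_le_of_bounded_mul_factorial hr hC hCF m
  rw [div_lt_iff₀ hpos] at hm
  nlinarith

theorem PowerSeries.eq_zero_of_bounded_mul_factorial (hr : 0 ≤ r)
    (hC : ∀ n, ‖coeff n C‖ ≤ M * r ^ n)
    (hCF : ∀ n, ‖coeff n (C * mk fun n => (n ! : 𝕜))‖ ≤ M * r ^ n) : C = 0 := by
  ext n
  rw [map_zero]
  induction n generalizing C M with
  | zero => exact coeff_zero_eq_zero_of_bounded_mul_factorial hr hC hCF
  | succ n ih =>
    obtain ⟨C', rfl⟩ : X ∣ C := X_dvd_iff.mpr <| by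
      rw [← coeff_zero_eq_constantCoeff_apply]
      exact coeff_zero_eq_zero_of_bounded_mul_factorial hr hC hCF
    rw [coeff_succ_X_mul]
    refine ih (M := M * r) (fun k => ?_) (fun k => ?_)
    · simpa [coeff_succ_X_mul, pow_succ', mul_assoc] using hC (k + 1)
    · simpa [mul_assoc, coeff_succ_X_mul, pow_succ'] using hCF (k + 1)

end

theorem fast_growing_series_stmt4 :
    ¬ ∃ C D : PowerSeries ℂ, C ≠ 0 ∧ ExponentialGrowthC C ∧ ExponentialGrowthC D ∧
      C * (PowerSeries.mk fun n => (n.factorial : ℂ)) = D := by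
  rintro ⟨C, _, hC0, hC, hD, rfl⟩
  obtain ⟨M, r, hr, hCb, hDb⟩ := hC.exists_common_bound hD
  exact hC0 (eq_zero_of_bounded_mul_factorial hr hCb hDb)
end

section
/- Fix a power series X ∈ K[[z]] over a field K and a natural number m ≥ 1. For each n, define (X^{[m]})_n := Σ over tuples (k_1,…,k_m) of nonnegative integers with k_1+…+k_m = n and each k_i ≤ n/2, of X_{k_1}···X_{k_m}; and define (X^{⟨m⟩})_n := Σ_{ℓ < n/2} (X^{m-1})_ℓ · X_{n-ℓ}. Then for every n, (X^m)_n = (X^{[m]})_n + m·(X^{⟨m⟩})_n. -/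
/-!
Expand `(X^m)_n` as a sum over compositions `(k_1, …, k_m)` of `n`. The compositions with
all parts `≤ n/2` give `X^{[m]}`. Any other composition has exactly one part `k_i > n/2`,
because two such parts would already add up to more than `n`. For each of the `m` positions
`i`, the compositions with `k_i = n - ℓ > n/2` contribute `Σ_{ℓ < n/2} (X^{m-1})_ℓ X_{n-ℓ}`,
which is `(X^{⟨m⟩})_n`.
-/

open Finset

namespace Finset.Nat

theorem sum_antidiagonalTuple_succ_eq_sum_insertNth {M : Type*} [AddCommMonoid M] (k n : ℕ)
    (i : Fin (k + 1)) (g : (Fin (k + 1) → ℕ) → M) :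
    ∑ f ∈ antidiagonalTuple (k + 1) n, g f =
      ∑ p ∈ antidiagonal n, ∑ t ∈ antidiagonalTuple k p.2, g (i.insertNth p.1 t) := by
  rw [sum_sigma']
  symm
  refine sum_nbij' (fun x => i.insertNth x.1.1 x.2) (fun f => ⟨(f i, n - f i), i.removeNth f⟩)
    ?_ ?_ ?_ ?_ (fun _ _ => rfl)
  · rintro ⟨⟨a, b⟩, t⟩ h
    simp only [mem_sigma, HasAntidiagonal.mem_antidiagonal, mem_antidiagonalTuple] at h ⊢
    rw [Fin.sum_univ_succAbove _ i]
    simp [h.1, h.2]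
  · intro f hf
    simp only [mem_antidiagonalTuple] at hf
    have := Fin.sum_univ_succAbove f i
    simp only [mem_sigma, HasAntidiagonal.mem_antidiagonal, mem_antidiagonalTuple,
      Fin.removeNth]
    omega
  · rintro ⟨⟨a, b⟩, t⟩ h
    simp only [mem_sigma, HasAntidiagonal.mem_antidiagonal] at h
    simp [← h.1]
  · intro f _
    simp

theorem add_le_of_mem_antidiagonalTuple {k n : ℕ} {f : Fin k → ℕ}
    (hf : f ∈ antidiagonalTuple k n) {a b : Fin k} (hab : a ≠ b) : f a + f b ≤ n := by
  rw [mem_antidiagonalTuple] at hf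
  rw [← hf, ← sum_pair hab]
  exact sum_le_sum_of_subset (subset_univ _)

end Finset.Nat

namespace PowerSeries

variable {R : Type*} [CommSemiring R]

theorem coeff_pow_eq_sum_antidiagonalTuple (φ : R⟦X⟧) (m n : ℕ) :
    coeff n (φ ^ m) = ∑ f ∈ Nat.antidiagonalTuple m n, ∏ i, coeff (f i) φ := by
  induction m generalizing n with
  | zero => cases n <;> simp [coeff_one]
  | succ m ih =>
    simp only [pow_succ', coeff_mul, ih, mul_sum,
      Nat.sum_antidiagonalTuple_succ_eq_sum_insertNth m n 0, Fin.insertNth_zero',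
      Fin.prod_univ_succ, Fin.cons_zero, Fin.cons_succ]

theorem sum_antidiagonalTuple_filter_lt_two_mul (φ : R⟦X⟧) (k n : ℕ) (i : Fin (k + 1)) :
    ∑ f ∈ (Nat.antidiagonalTuple (k + 1) n).filter (fun f => n < 2 * f i),
        ∏ j, coeff (f j) φ =
      ∑ ℓ ∈ (range n).filter (fun ℓ => 2 * ℓ < n),
        coeff ℓ (φ ^ k) * coeff (n - ℓ) φ := by
  simp only [sum_filter, Nat.sum_antidiagonalTuple_succ_eq_sum_insertNth k n i,
    Fin.insertNth_apply_same, coeff_pow_eq_sum_antidiagonalTuple, sum_mul,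
    Fin.prod_univ_succAbove _ i, Fin.insertNth_apply_succAbove]
  rw [← Nat.sum_antidiagonal_swap, Nat.sum_antidiagonal_eq_sum_range_succ_mk,
    sum_range_succ]
  simp only [Prod.swap_prod_mk, Nat.sub_self, mul_zero, Nat.not_lt_zero, if_false,
    sum_const_zero, add_zero]
  refine sum_congr rfl fun ℓ hℓ => ?_
  have hℓn : ℓ < n := mem_range.mp hℓ
  by_cases h : 2 * ℓ < n
  · simp only [show n < 2 * (n - ℓ) by omega, h, if_true]
    exact sum_congr rfl fun _ _ => mul_comm _ _
  · simp only [show ¬n < 2 * (n - ℓ) by omega, h, if_false, sum_const_zero]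

theorem coeff_pow_eq_sum_bounded_add_mul (φ : R⟦X⟧) (m n : ℕ) :
    coeff n (φ ^ m) =
      (∑ f ∈ (Nat.antidiagonalTuple m n).filter (fun f => ∀ i, 2 * f i ≤ n),
        ∏ i, coeff (f i) φ)
      + (m : R) * ∑ ℓ ∈ (range n).filter (fun ℓ => 2 * ℓ < n),
          coeff ℓ (φ ^ (m - 1)) * coeff (n - ℓ) φ := by
  rw [coeff_pow_eq_sum_antidiagonalTuple,
    ← sum_filter_add_sum_filter_not _ (fun f => ∀ i, 2 * f i ≤ n)]
  rcases m with _ | k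
  · simp
  congr 1
  have h_unbounded : (Nat.antidiagonalTuple (k + 1) n).filter (fun f => ¬ ∀ i, 2 * f i ≤ n)
      = univ.biUnion fun i =>
          (Nat.antidiagonalTuple (k + 1) n).filter (fun f => n < 2 * f i) := by
    ext f
    simp only [mem_filter, mem_biUnion, mem_univ, true_and, not_forall, not_le, exists_and_left]
  have h_disjoint : Set.PairwiseDisjoint (univ : Finset (Fin (k + 1))) fun i =>
      (Nat.antidiagonalTuple (k + 1) n).filter (fun f => n < 2 * f i) := by
    intro a _ b _ hab
    refine disjoint_left.mpr fun f hfa hfb => ?_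
    rw [mem_filter] at hfa hfb
    have := Nat.add_le_of_mem_antidiagonalTuple hfa.1 hab
    omega
  rw [h_unbounded, sum_biUnion h_disjoint]
  simp only [sum_antidiagonalTuple_filter_lt_two_mul, sum_const, card_univ, Fintype.card_fin,
    nsmul_eq_mul, add_tsub_cancel_right]

end PowerSeries

theorem fast_growing_series_stmt5_general {K : Type*} [Field K] (X : PowerSeries K)
    (m : ℕ) (n : ℕ) :
    PowerSeries.coeff (R := K) n (X ^ m) =
      (∑ f ∈ (Finset.Nat.antidiagonalTuple m n).filter (fun f => ∀ i, 2 * f i ≤ n),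
        ∏ i, PowerSeries.coeff (R := K) (f i) X)
      + (m : K) * ∑ ℓ ∈ (Finset.range n).filter (fun ℓ => 2 * ℓ < n),
          PowerSeries.coeff (R := K) ℓ (X ^ (m - 1)) * PowerSeries.coeff (R := K) (n - ℓ) X :=
  PowerSeries.coeff_pow_eq_sum_bounded_add_mul X m n

theorem fast_growing_series_stmt5 {K : Type*} [Field K] (X : PowerSeries K)
    (m : ℕ) (hm : 1 ≤ m) (n : ℕ) :
    PowerSeries.coeff (R := K) n (X ^ m) =
      (∑ f ∈ (Finset.Nat.antidiagonalTuple m n).filter (fun f => ∀ i, 2 * f i ≤ n),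
        ∏ i, PowerSeries.coeff (R := K) (f i) X)
      + (m : K) * ∑ ℓ ∈ (Finset.range n).filter (fun ℓ => 2 * ℓ < n),
          PowerSeries.coeff (R := K) ℓ (X ^ (m - 1)) * PowerSeries.coeff (R := K) (n - ℓ) X :=
  fast_growing_series_stmt5_general X m n
end

section
/- Let K be a field of characteristic 0 with an absolute value, R a subring of K[[z]], and ρ : ℕ → ℝ_{>0} monotone increasing with C_n = O(ρ(n)) for every C ∈ R. Suppose X ∈ K[[z]] satisfies |X_0| ≥ 1 and, for every fixed λ ∈ ℕ and m ∈ ℕ, as n → ∞: (i) ρ(n)·(Σ_{ℓ ≤ n/2} |X_ℓ|)^m = o(|X_{n-λ}|), and (ii) ρ(n)·|X_{n-λ-1}|·(Σ_{ℓ < n/2} |X_ℓ|)^m = o(|X_{n-λ}|). Then X is transcendental over R. -/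
/-!
The heart of the proof is that `A(X) = 0` forces `A'(X) = 0`; since `A'` again has
coefficients in `R`, induction on the degree then leaves only constant `A`, which must vanish.

Suppose `A(X) = 0` but `Y = A'(X) ≠ 0`, of order `λ`. For large `n` split `X = P + Q`, where `P`
is the truncation of `X` at degree `⌊n/2⌋`. Since `Q` has order `> n/2`, Taylor's formula gives
`A(X) ≡ A(P) + Y Q` modulo `z^(n+1)`, and comparing `n`-th coefficients,
`Y_λ X_{n-λ} = -(A(P)_n + ∑_{λ < k < n/2} Y_k X_{n-k})`.
The coefficients of `A(P)` and the `Y_k` are bounded by `ρ(n)` times powers of the partial sums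
`∑_{ℓ ≤ n/2} |X_ℓ|`, while the coefficients of `X` eventually (at least) double, so that
`∑_{λ < k < n/2} |X_{n-k}| ≤ 2 |X_{n-λ-1}|`. The two growth conditions make the right-hand side
`o(|X_{n-λ}|)`, contradicting `Y_λ ≠ 0`.
-/

open Asymptotics Filter Finset PowerSeries

section Taylor

variable {K : Type*} [CommRing K]

lemma coeff_eval_eq_add_coeff_eval_derivative_mul (A : Polynomial (PowerSeries K))
    {f g : PowerSeries K} {m n : ℕ} (hfg : X ^ m ∣ f - g) (hn : n < 2 * m) :
    coeff n (A.eval f) = coeff n (A.eval g) + coeff n (A.derivative.eval f * (f - g)) := by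
  obtain ⟨k, hk⟩ := A.binomExpansion g (f - g)
  obtain ⟨s, hs⟩ := Polynomial.sub_dvd_eval_sub f g A.derivative
  obtain ⟨q, hq⟩ := hfg
  rw [add_sub_cancel] at hk
  have htaylor : A.eval f = A.eval g + A.derivative.eval f * (f - g) +
      X ^ (2 * m) * ((k - s) * q ^ 2) := by
    linear_combination hk - (f - g) * hs + (k - s) * (f - g + X ^ m * q) * hq
  rw [htaylor, map_add, map_add, coeff_X_pow_mul', if_neg (by omega), add_zero]

lemma coeff_mul_eq_sum_Ico {f g : PowerSeries K} {a b : ℕ} (hf : ∀ k < a, coeff k f = 0)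
    (hg : ∀ j < b, coeff j g = 0) (n : ℕ) :
    coeff n (f * g) = ∑ k ∈ Ico a (n + 1 - b), coeff k f * coeff (n - k) g := by
  rw [coeff_mul, Nat.sum_antidiagonal_eq_sum_range_succ_mk]
  refine (sum_subset (fun k hk => ?_) fun k hk hk' => ?_).symm
  · simp only [mem_Ico, mem_range] at hk ⊢
    omega
  · simp only [mem_Ico, mem_range, not_and_or, not_le, not_lt] at hk hk'
    rcases hk' with hk' | hk'
    · rw [hf k hk', zero_mul]
    · rw [hg (n - k) (by omega), mul_zero]

end Taylor

section AbsCoeffSum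

variable {K : Type*} [CommRing K] (v : AbsoluteValue K ℝ)

noncomputable def absCoeffSum (f : PowerSeries K) (n : ℕ) : ℝ :=
  ∑ i ∈ range n, v (coeff i f)

variable {v} {ρ : ℕ → ℝ}

lemma absCoeffSum_nonneg (f : PowerSeries K) (n : ℕ) : 0 ≤ absCoeffSum v f n :=
  sum_nonneg fun _ _ => v.nonneg _

lemma absCoeffSum_mono (f : PowerSeries K) : Monotone (absCoeffSum v f) := fun _ _ h =>
  sum_le_sum_of_subset_of_nonneg (range_mono h) fun _ _ _ => v.nonneg _

lemma one_le_absCoeffSum {f : PowerSeries K} (hf : 1 ≤ v (coeff 0 f)) {n : ℕ} (hn : 0 < n) :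
    1 ≤ absCoeffSum v f n :=
  hf.trans <| single_le_sum (f := fun i => v (coeff i f)) (fun _ _ => v.nonneg _)
    (mem_range.2 hn)

lemma absCoeffSum_trunc {f : PowerSeries K} {m n : ℕ} (h : m ≤ n) :
    absCoeffSum v (trunc m f : PowerSeries K) n = absCoeffSum v f m := by
  have hhigh : ∀ i ∈ Ico m n, v (coeff i (trunc m f : PowerSeries K)) = 0 := fun i hi => by
    rw [Polynomial.coeff_coe, coeff_trunc, if_neg (mem_Ico.1 hi).1.not_gt, map_zero]
  rw [absCoeffSum, ← sum_range_add_sum_Ico _ h, sum_eq_zero hhigh, add_zero]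
  exact sum_congr rfl fun i hi => by
    rw [Polynomial.coeff_coe, coeff_trunc, if_pos (mem_range.1 hi)]

lemma absCoeffSum_mul_le (f g : PowerSeries K) (n : ℕ) :
    absCoeffSum v (f * g) n ≤ absCoeffSum v f n * absCoeffSum v g n := by
  calc absCoeffSum v (f * g) n
      ≤ ∑ m ∈ range n, ∑ k ∈ range (m + 1), v (coeff k f) * v (coeff (m - k) g) := by
        refine sum_le_sum fun m _ => ?_
        rw [coeff_mul, Nat.sum_antidiagonal_eq_sum_range_succ_mk]
        exact (v.sum_le _ _).trans_eq (sum_congr rfl fun _ _ => v.map_mul _ _)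
    _ = ∑ m ∈ range n, ∑ k ∈ range (n - m), v (coeff m f) * v (coeff k g) :=
        sum_range_diag_flip n fun k j => v (coeff k f) * v (coeff j g)
    _ ≤ ∑ m ∈ range n, ∑ k ∈ range n, v (coeff m f) * v (coeff k g) :=
        sum_le_sum fun _ _ => sum_le_sum_of_subset_of_nonneg (range_mono (Nat.sub_le _ _))
          fun _ _ _ => mul_nonneg (v.nonneg _) (v.nonneg _)
    _ = absCoeffSum v f n * absCoeffSum v g n := (sum_mul_sum _ _ _ _).symm

lemma absCoeffSum_one_le [Nontrivial K] (n : ℕ) : absCoeffSum v 1 n ≤ 1 := by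
  simp only [absCoeffSum, coeff_one, apply_ite v, v.map_one, v.map_zero, sum_ite_eq', mem_range]
  split_ifs <;> norm_num

lemma absCoeffSum_pow_le [Nontrivial K] (f : PowerSeries K) (n j : ℕ) :
    absCoeffSum v (f ^ j) n ≤ absCoeffSum v f n ^ j := by
  induction j with
  | zero => simpa using absCoeffSum_one_le n
  | succ j ih =>
    rw [pow_succ, pow_succ]
    exact (absCoeffSum_mul_le _ _ n).trans
      (mul_le_mul_of_nonneg_right ih (absCoeffSum_nonneg f n))

lemma abv_coeff_mul_le {a g : PowerSeries K} {n : ℕ} {M : ℝ}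
    (ha : ∀ i ≤ n, v (coeff i a) ≤ M) :
    v (coeff n (a * g)) ≤ M * absCoeffSum v g (n + 1) := by
  calc v (coeff n (a * g)) ≤ ∑ k ∈ range (n + 1), M * v (coeff (n - k) g) := by
        rw [coeff_mul, Nat.sum_antidiagonal_eq_sum_range_succ_mk]
        refine (v.sum_le _ _).trans (sum_le_sum fun k hk => ?_)
        rw [v.map_mul]
        exact mul_le_mul_of_nonneg_right (ha k (Nat.lt_succ_iff.1 (mem_range.1 hk))) (v.nonneg _)
    _ = M * absCoeffSum v g (n + 1) := by
        rw [absCoeffSum, mul_sum, ← sum_range_reflect (fun k => M * v (coeff k g))]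
        simp only [Nat.add_sub_cancel]

lemma exists_abv_coeff_eval_le [Nontrivial K] (hρpos : ∀ n, 0 < ρ n) (hρ : Monotone ρ)
    {A : Polynomial (PowerSeries K)}
    (hA : ∀ j, (fun n => v (coeff n (A.coeff j))) =O[atTop] ρ) :
    ∃ c, 0 ≤ c ∧ ∀ f n N, 1 ≤ N → absCoeffSum v f (n + 1) ≤ N →
      v (coeff n (A.eval f)) ≤ c * ρ n * N ^ A.natDegree := by
  choose C hC0 hC using fun j => bound_of_isBigO_nat_atTop (hA j)
  refine ⟨∑ j ∈ range (A.natDegree + 1), C j, sum_nonneg fun j _ => (hC0 j).le,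
    fun f n N hN hfN => ?_⟩
  have hterm : ∀ j ∈ range (A.natDegree + 1),
      v (coeff n (A.coeff j * f ^ j)) ≤ C j * ρ n * N ^ A.natDegree := by
    intro j hj
    have hcoeff : ∀ i ≤ n, v (coeff i (A.coeff j)) ≤ C j * ρ n := fun i hi => by
      have := hC j (hρpos i).ne'
      rw [Real.norm_of_nonneg (v.nonneg _), Real.norm_of_nonneg (hρpos i).le] at this
      exact this.trans (mul_le_mul_of_nonneg_left (hρ hi) (hC0 j).le)
    calc v (coeff n (A.coeff j * f ^ j)) ≤ C j * ρ n * absCoeffSum v (f ^ j) (n + 1) :=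
          abv_coeff_mul_le hcoeff
      _ ≤ C j * ρ n * N ^ A.natDegree := by
          refine mul_le_mul_of_nonneg_left ?_ (mul_nonneg (hC0 j).le (hρpos n).le)
          calc absCoeffSum v (f ^ j) (n + 1) ≤ absCoeffSum v f (n + 1) ^ j :=
                absCoeffSum_pow_le f _ j
            _ ≤ N ^ j := pow_le_pow_left₀ (absCoeffSum_nonneg f _) hfN j
            _ ≤ N ^ A.natDegree := pow_le_pow_right₀ hN (Nat.lt_succ_iff.1 (mem_range.1 hj))
  calc v (coeff n (A.eval f))
        = v (∑ j ∈ range (A.natDegree + 1), coeff n (A.coeff j * f ^ j)) := by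
        rw [Polynomial.eval_eq_sum_range, map_sum]
    _ ≤ ∑ j ∈ range (A.natDegree + 1), C j * ρ n * N ^ A.natDegree :=
        (v.sum_le _ _).trans (sum_le_sum hterm)
    _ = (∑ j ∈ range (A.natDegree + 1), C j) * ρ n * N ^ A.natDegree := by
        rw [sum_mul, sum_mul]

end AbsCoeffSum

lemma sum_Ico_le_of_two_mul_le {u : ℕ → ℝ} (hu : ∀ k, 0 ≤ u k) {a : ℕ}
    (h : ∀ k, a ≤ k → 2 * u k ≤ u (k + 1)) (b : ℕ) : ∑ k ∈ Ico a b, u k ≤ u b := by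
  induction b with
  | zero => simpa using hu 0
  | succ b ih =>
    rcases le_or_gt a b with hab | hab
    · rw [sum_Ico_succ_top hab]
      linarith [h b hab]
    · rw [Ico_eq_empty_of_le hab, sum_empty]
      exact hu _

lemma eventually_two_mul_le_succ {u ρ : ℕ → ℝ} (hu : ∀ n, 0 ≤ u n) (hρ0 : 0 < ρ 0)
    (hρ : Monotone ρ) (h : (fun n => ρ n * u (n - 1)) =o[atTop] u) :
    ∀ᶠ k in atTop, 2 * u k ≤ u (k + 1) := by
  filter_upwards [(tendsto_add_atTop_nat 1).eventually (h.bound (half_pos hρ0))] with k hk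
  have hρk : ρ 0 ≤ ρ (k + 1) := hρ (k + 1).zero_le
  rw [Nat.add_sub_cancel, Real.norm_of_nonneg (mul_nonneg (hρ0.trans_le hρk).le (hu k)),
    Real.norm_of_nonneg (hu _)] at hk
  nlinarith [hu k]

section Transcendence

variable {K : Type*} [CommRing K] {v : AbsoluteValue K ℝ} {ρ : ℕ → ℝ}

lemma abv_coeff_mul_le_of_eval_eq_zero {A : Polynomial (PowerSeries K)} {X : PowerSeries K}
    (hAX : A.eval X = 0) {lam t n : ℕ} (hlam : ∀ k < lam, coeff k (A.derivative.eval X) = 0)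
    (hlt : lam + t < n) (hn : n ≤ 2 * t + 1) :
    v (coeff lam (A.derivative.eval X)) * v (coeff (n - lam) X) ≤
      v (coeff n (A.eval (trunc (t + 1) X : PowerSeries K))) +
        ∑ k ∈ Ico (lam + 1) (n - t),
          v (coeff k (A.derivative.eval X)) * v (coeff (n - k) X) := by
  set Y := A.derivative.eval X
  set P : PowerSeries K := ((trunc (t + 1) X : Polynomial K) : PowerSeries K)
  have hQ : ∀ j, coeff j (X - P) = if j < t + 1 then 0 else coeff j X := fun j => by
    rw [map_sub, Polynomial.coeff_coe, coeff_trunc]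
    split_ifs <;> simp
  have hQlow : ∀ j < t + 1, coeff j (X - P) = 0 := fun j hj => by rw [hQ, if_pos hj]
  have hQX : ∀ j, v (coeff j (X - P)) ≤ v (coeff j X) := fun j => by
    rw [hQ]; split_ifs <;> simp
  -- first-order Taylor expansion of `A` at `P`, read off at `z ^ n`
  have hexp : coeff n (A.eval P) + (coeff lam Y * coeff (n - lam) (X - P) +
      ∑ k ∈ Ico (lam + 1) (n - t), coeff k Y * coeff (n - k) (X - P)) = 0 := by
    rw [← sum_eq_sum_Ico_succ_bot (show lam < n - t by omega)
        (fun k => coeff k Y * coeff (n - k) (X - P)), ← Nat.add_sub_add_right n 1 t,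
      ← coeff_mul_eq_sum_Ico hlam hQlow,
      ← coeff_eval_eq_add_coeff_eval_derivative_mul A (X_pow_dvd_iff.2 hQlow) (by omega),
      hAX, map_zero]
  calc v (coeff lam Y) * v (coeff (n - lam) X) = v (coeff lam Y * coeff (n - lam) (X - P)) := by
        rw [v.map_mul, hQ, if_neg (by omega)]
    _ = v (-(coeff n (A.eval P) +
          ∑ k ∈ Ico (lam + 1) (n - t), coeff k Y * coeff (n - k) (X - P))) := by
        congr 1
        linear_combination hexp
    _ ≤ v (coeff n (A.eval P)) +
          ∑ k ∈ Ico (lam + 1) (n - t), v (coeff k Y) * v (coeff (n - k) X) := by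
        rw [v.map_neg]
        refine (v.add_le _ _).trans (add_le_add_right ((v.sum_le _ _).trans ?_) _)
        exact sum_le_sum fun k _ => (v.map_mul _ _).trans_le
          (mul_le_mul_of_nonneg_left (hQX _) (v.nonneg _))

lemma abv_coeff_mul_le_of_growth (hρpos : ∀ n, 0 < ρ n) (hρ : Monotone ρ)
    {A : Polynomial (PowerSeries K)} {X : PowerSeries K} {c₁ c₂ : ℝ} (hc₂ : 0 ≤ c₂)
    (hc₁A : ∀ f n N, 1 ≤ N → absCoeffSum v f (n + 1) ≤ N →
      v (coeff n (A.eval f)) ≤ c₁ * ρ n * N ^ A.natDegree)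
    (hc₂A : ∀ f n N, 1 ≤ N → absCoeffSum v f (n + 1) ≤ N →
      v (coeff n (A.derivative.eval f)) ≤ c₂ * ρ n * N ^ A.derivative.natDegree)
    (hX0 : 1 ≤ v (coeff 0 X)) (hAX : A.eval X = 0) {lam N₀ n : ℕ}
    (hlam : ∀ k < lam, coeff k (A.derivative.eval X) = 0)
    (hgrowth : ∀ k, N₀ ≤ k → 2 * v (coeff k X) ≤ v (coeff (k + 1) X))
    (hn : 2 * (N₀ + lam + 2) ≤ n) :
    v (coeff lam (A.derivative.eval X)) * v (coeff (n - lam) X) ≤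
      c₁ * (ρ n * absCoeffSum v X (n / 2 + 1) ^ A.natDegree) +
      2 * c₂ * (ρ n * v (coeff (n - lam - 1) X) *
        absCoeffSum v X (n - n / 2) ^ A.derivative.natDegree) := by
  set t := n / 2 with ht
  set M := c₂ * ρ n * absCoeffSum v X (n - t) ^ A.derivative.natDegree
  have hP : v (coeff n (A.eval (trunc (t + 1) X : PowerSeries K))) ≤
      c₁ * ρ n * absCoeffSum v X (t + 1) ^ A.natDegree :=
    hc₁A _ n _ (one_le_absCoeffSum hX0 t.succ_pos) (absCoeffSum_trunc (by omega)).le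
  have hS' := absCoeffSum_nonneg (v := v) X (n - t)
  have hY : ∀ k ∈ Ico (lam + 1) (n - t), v (coeff k (A.derivative.eval X)) ≤ M := by
    intro k hk
    have hkt : k + 1 ≤ n - t := by simp only [mem_Ico] at hk; omega
    calc v (coeff k (A.derivative.eval X))
        ≤ c₂ * ρ k * absCoeffSum v X (n - t) ^ A.derivative.natDegree :=
          hc₂A X k _ (one_le_absCoeffSum hX0 (by omega)) (absCoeffSum_mono X hkt)
      _ ≤ M := mul_le_mul_of_nonneg_right (mul_le_mul_of_nonneg_left (hρ (by omega)) hc₂)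
          (pow_nonneg hS' _)
  have hgeom :
      ∑ k ∈ Ico (lam + 1) (n - t), v (coeff (n - k) X) ≤ 2 * v (coeff (n - lam - 1) X) := by
    rw [sum_Ico_reflect (fun j => v (coeff j X)) _ (show n - t ≤ n + 1 by omega),
      show n + 1 - (n - t) = t + 1 by omega, show n + 1 - (lam + 1) = n - lam - 1 + 1 by omega,
      sum_Ico_succ_top (by omega)]
    linarith [sum_Ico_le_of_two_mul_le (a := t + 1) (fun j => v.nonneg (coeff j X))
      (fun k hk => hgrowth k (by omega)) (n - lam - 1)]
  have hM : 0 ≤ M := by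
    have := hρpos n
    positivity
  calc v (coeff lam (A.derivative.eval X)) * v (coeff (n - lam) X)
      ≤ c₁ * ρ n * absCoeffSum v X (t + 1) ^ A.natDegree +
          M * ∑ k ∈ Ico (lam + 1) (n - t), v (coeff (n - k) X) := by
        refine (abv_coeff_mul_le_of_eval_eq_zero (t := t) hAX hlam (by omega) (by omega)).trans ?_
        rw [mul_sum]
        exact add_le_add hP
          (sum_le_sum fun k hk => mul_le_mul_of_nonneg_right (hY k hk) (v.nonneg _))
    _ ≤ c₁ * ρ n * absCoeffSum v X (t + 1) ^ A.natDegree +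
          M * (2 * v (coeff (n - lam - 1) X)) := by
        gcongr
    _ = _ := by ring

theorem eval_derivative_eq_zero_of_eval_eq_zero [Nontrivial K] (hρpos : ∀ n, 0 < ρ n)
    (hρ : Monotone ρ) {X : PowerSeries K} (hX0 : 1 ≤ v (coeff 0 X))
    (h₁ : ∀ lam m : ℕ, (fun n => ρ n * absCoeffSum v X (n / 2 + 1) ^ m)
      =o[atTop] fun n => v (coeff (n - lam) X))
    (h₂ : ∀ lam m : ℕ,
      (fun n => ρ n * v (coeff (n - lam - 1) X) * absCoeffSum v X (n - n / 2) ^ m)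
        =o[atTop] fun n => v (coeff (n - lam) X))
    {A : Polynomial (PowerSeries K)} (hA : ∀ j, (fun n => v (coeff n (A.coeff j))) =O[atTop] ρ)
    (hA' : ∀ j, (fun n => v (coeff n (A.derivative.coeff j))) =O[atTop] ρ)
    (hAX : A.eval X = 0) :
    A.derivative.eval X = 0 := by
  by_contra hY
  set lam := (A.derivative.eval X).order.toNat
  have hvY : 0 < v (coeff lam (A.derivative.eval X)) := v.pos (coeff_order hY)
  obtain ⟨c₁, -, hc₁⟩ := exists_abv_coeff_eval_le hρpos hρ hA
  obtain ⟨c₂, hc₂, hc₂'⟩ := exists_abv_coeff_eval_le hρpos hρ hA'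
  obtain ⟨N₀, hN₀⟩ := eventually_atTop.1 <|
    eventually_two_mul_le_succ (fun n => v.nonneg (coeff n X)) (hρpos 0) hρ
      (by simpa using h₂ 0 0)
  have hsmall : ∀ᶠ n in atTop,
      c₁ * (ρ n * absCoeffSum v X (n / 2 + 1) ^ A.natDegree) +
        2 * c₂ * (ρ n * v (coeff (n - lam - 1) X) *
          absCoeffSum v X (n - n / 2) ^ A.derivative.natDegree) ≤
      v (coeff lam (A.derivative.eval X)) / 2 * v (coeff (n - lam) X) := by
    filter_upwards [(((h₁ lam _).const_mul_left c₁).add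
      ((h₂ lam _).const_mul_left (2 * c₂))).bound (half_pos hvY)] with n hn
    rw [Real.norm_of_nonneg (v.nonneg _)] at hn
    exact (Real.le_norm_self _).trans hn
  have hpos : ∀ᶠ n in atTop, 0 < v (coeff (n - lam) X) := by
    filter_upwards [(h₁ lam 0).bound one_pos] with n hn
    rw [pow_zero, mul_one, one_mul, Real.norm_of_nonneg (hρpos n).le,
      Real.norm_of_nonneg (v.nonneg _)] at hn
    exact (hρpos n).trans_le hn
  obtain ⟨n, hn, hXn, hN⟩ :=
    (hsmall.and (hpos.and (eventually_ge_atTop (2 * (N₀ + lam + 2))))).exists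
  have := abv_coeff_mul_le_of_growth hρpos hρ hc₂ hc₁ hc₂' hX0 hAX
    (fun k hk => coeff_of_lt_order_toNat k hk) hN₀ hN
  nlinarith [mul_pos hvY hXn]

end Transcendence

lemma range_succ_filter_two_mul_le (n : ℕ) :
    (range (n + 1)).filter (fun ℓ => 2 * ℓ ≤ n) = range (n / 2 + 1) := by
  ext ℓ
  simp only [mem_filter, mem_range]
  omega

lemma range_filter_two_mul_lt (n : ℕ) :
    (range n).filter (fun ℓ => 2 * ℓ < n) = range (n - n / 2) := by
  ext ℓ
  simp only [mem_filter, mem_range]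
  omega

theorem fast_growing_series_stmt11 {K : Type*} [Field K] [CharZero K]
    (v : AbsoluteValue K ℝ) (R : Subring (PowerSeries K)) (X : PowerSeries K)
    (ρ : ℕ → ℝ) (hρpos : ∀ n, 0 < ρ n) (hρmono : Monotone ρ)
    (hR : ∀ C ∈ R, (fun n => v (PowerSeries.coeff (R := K) n C)) =O[atTop] ρ)
    (hX0 : 1 ≤ v (PowerSeries.coeff (R := K) 0 X))
    (hcond1 : ∀ lam m : ℕ,
      (fun n => ρ n *
          (∑ ℓ ∈ (Finset.range (n + 1)).filter (fun ℓ => 2 * ℓ ≤ n),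
            v (PowerSeries.coeff (R := K) ℓ X)) ^ m)
        =o[atTop] fun n => v (PowerSeries.coeff (R := K) (n - lam) X))
    (hcond2 : ∀ lam m : ℕ,
      (fun n => ρ n * v (PowerSeries.coeff (R := K) (n - lam - 1) X) *
          (∑ ℓ ∈ (Finset.range n).filter (fun ℓ => 2 * ℓ < n),
            v (PowerSeries.coeff (R := K) ℓ X)) ^ m)
        =o[atTop] fun n => v (PowerSeries.coeff (R := K) (n - lam) X)) :
    ∀ A : Polynomial (PowerSeries K), (∀ j, A.coeff j ∈ R) →
      Polynomial.eval X A = 0 → A = 0 := by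
  have : IsAddTorsionFree (PowerSeries K) := .of_module_rat _
  simp only [range_succ_filter_two_mul_le, range_filter_two_mul_lt] at hcond1 hcond2
  intro A hA hAX
  induction hd : A.natDegree using Nat.strong_induction_on generalizing A with
  | _ d ih =>
  have hA' : ∀ j, A.derivative.coeff j ∈ R := fun j => by
    rw [Polynomial.coeff_derivative]
    exact R.mul_mem (hA _) (R.add_mem (natCast_mem R j) R.one_mem)
  have hA'X := eval_derivative_eq_zero_of_eval_eq_zero hρpos hρmono hX0 hcond1 hcond2
    (fun j => hR _ (hA j)) (fun j => hR _ (hA' j)) hAX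
  have hA'0 : A.derivative = 0 := by
    rcases eq_or_ne d 0 with rfl | hd0
    · exact Polynomial.derivative_eq_zero.2 hd
    · exact ih _ (hd ▸ Polynomial.natDegree_derivative_lt (hd ▸ hd0)) _ hA' hA'X rfl
  rw [Polynomial.eq_C_of_derivative_eq_zero hA'0, Polynomial.eval_C] at hAX
  rw [Polynomial.eq_C_of_derivative_eq_zero hA'0, hAX, map_zero]
end

section
/- The power series X = Σ_{n≥0} 2^{n!}·z^n ∈ ℂ[[z]] is transcendental over the ring R of power series in ℂ[[z]] exhibiting exponential growth: the only polynomial A(t) ∈ R[t] with A(X) = 0 is the zero polynomial. -/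
/-!
If `A(X) = 0` then `A'(X) = 0` as well; the coefficients of `A'` still grow at most exponentially,
so by induction on the degree `A' = 0`, and `A` is the constant `A(X) = 0`.

Suppose `A'(X)` has order `k` and lowest coefficient `c ≠ 0`. Write `X = Y + T` with `Y` the
truncation of `X` below degree `N > k`, so that `T = 2^{N!} z^N + O(z^{N+1})`. Taylor expansion,
`A(Y + T) ≡ A(Y) + A'(Y + T) T (mod T²)`, gives `[z^{k+N}] A(Y) = -c 2^{N!}`. But the coefficients
of `Y` are at most `2^{(N-1)!}` and the `ℓ¹` norm of the coefficients of degree `≤ n` is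
submultiplicative, so `|[z^{k+N}] A(Y)| ≤ K S^N 2^{d (N-1)!}` with `d = deg A` and `K`, `S`
independent of `N`; since `N! = N (N-1)!`, this fails for large `N`.
-/

open Finset Filter PowerSeries
open scoped Nat

lemma eventually_add_mul_add_mul_factorial_lt (s t d : ℕ) :
    ∀ᶠ N in atTop, t + s * N + d * (N - 1)! < N ! := by
  filter_upwards [eventually_ge_atTop (d + s + t + 3)] with N hN
  obtain ⟨m, rfl⟩ : ∃ m, N = m + 2 := ⟨N - 2, by omega⟩
  rw [Nat.factorial_succ (m + 1), show m + 2 - 1 = m + 1 by omega]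
  have h_lin : t + s * (m + 2) < (m + 1)! := by
    have : (m + 1) * m ≤ (m + 1)! := Nat.mul_le_mul_left _ (Nat.self_le_factorial m)
    nlinarith
  have : (d + 1) * (m + 1)! ≤ (m + 2) * (m + 1)! := Nat.mul_le_mul_right _ (by omega)
  linarith

lemma eventually_mul_pow_mul_two_pow_lt {a : ℝ} (ha : 0 < a) (K S : ℝ) (hS : 0 ≤ S)
    (d : ℕ) : ∀ᶠ N in atTop, K * S ^ N * 2 ^ (d * (N - 1)!) < a * 2 ^ N ! := by
  obtain ⟨t, ht⟩ := pow_unbounded_of_one_lt (K / a) one_lt_two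
  obtain ⟨s, hs⟩ := pow_unbounded_of_one_lt S one_lt_two
  rw [div_lt_iff₀ ha, mul_comm] at ht
  filter_upwards [eventually_add_mul_add_mul_factorial_lt s t d] with N hN
  calc K * S ^ N * 2 ^ (d * (N - 1)!)
      ≤ a * 2 ^ t * (2 ^ s) ^ N * 2 ^ (d * (N - 1)!) := by gcongr
    _ = a * 2 ^ (t + s * N + d * (N - 1)!) := by ring
    _ < a * 2 ^ N ! := by gcongr; norm_num

lemma Polynomial.sq_dvd_eval_add_sub_eval_sub_mul {S : Type*} [CommRing S] (A : Polynomial S)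
    (y t : S) :
    t ^ 2 ∣ A.eval (y + t) - A.eval y - A.derivative.eval (y + t) * t := by
  obtain ⟨q, hq⟩ := A.binomExpansion y t
  obtain ⟨u, hu⟩ := Polynomial.sub_dvd_eval_sub (y + t) y A.derivative
  rw [add_sub_cancel_left] at hu
  exact ⟨q - u, by linear_combination hq - t * hu⟩

namespace PowerSeries

section TruncNorm

variable {R : Type*} [SeminormedRing R]

lemma sum_norm_coeff_mul_le (n : ℕ) (f g : R⟦X⟧) :
    ∑ p ∈ range (n + 1), ‖coeff p (f * g)‖ ≤
      (∑ p ∈ range (n + 1), ‖coeff p f‖) * ∑ p ∈ range (n + 1), ‖coeff p g‖ := by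
  calc ∑ p ∈ range (n + 1), ‖coeff p (f * g)‖
      ≤ ∑ p ∈ range (n + 1), ∑ i ∈ range (p + 1), ‖coeff i f‖ * ‖coeff (p - i) g‖ := by
        refine sum_le_sum fun p _ => ?_
        rw [coeff_mul,
          ← Nat.sum_antidiagonal_eq_sum_range_succ fun i j => ‖coeff i f‖ * ‖coeff j g‖]
        exact (norm_sum_le _ _).trans (sum_le_sum fun x _ => norm_mul_le _ _)
    _ = ∑ i ∈ range (n + 1), ∑ j ∈ range (n + 1 - i), ‖coeff i f‖ * ‖coeff j g‖ :=
        sum_range_diag_flip _ fun i j => ‖coeff i f‖ * ‖coeff j g‖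
    _ ≤ ∑ i ∈ range (n + 1), ∑ j ∈ range (n + 1), ‖coeff i f‖ * ‖coeff j g‖ :=
        sum_le_sum fun i _ => sum_le_sum_of_subset_of_nonneg
          (range_subset_range.2 (Nat.sub_le _ _)) fun _ _ _ => by positivity
    _ = _ := (sum_mul_sum _ _ _ _).symm

variable (R) in
noncomputable def truncNorm (n : ℕ) : RingSeminorm R⟦X⟧ where
  toFun f := ∑ p ∈ range (n + 1), ‖coeff p f‖
  map_zero' := by simp
  add_le' f g := by
    simp only [map_add, ← sum_add_distrib]
    exact sum_le_sum fun p _ => norm_add_le _ _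
  neg' f := by simp
  mul_le' := sum_norm_coeff_mul_le n

lemma truncNorm_apply (n : ℕ) (f : R⟦X⟧) :
    truncNorm R n f = ∑ p ∈ range (n + 1), ‖coeff p f‖ := rfl

lemma norm_coeff_le_truncNorm {p n : ℕ} (h : p ≤ n) (f : R⟦X⟧) :
    ‖coeff p f‖ ≤ truncNorm R n f :=
  single_le_sum (f := fun p => ‖coeff p f‖) (fun _ _ => norm_nonneg _)
    (mem_range.2 (Nat.lt_succ_of_le h))

lemma truncNorm_le_of_norm_coeff_le {f : R⟦X⟧} {M r : ℝ} (hM : 0 ≤ M) (hr : 1 ≤ r)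
    (hf : ∀ p, ‖coeff p f‖ ≤ M * r ^ p) (n : ℕ) : truncNorm R n f ≤ M * (2 * r) ^ n :=
  calc truncNorm R n f ≤ ∑ _p ∈ range (n + 1), M * r ^ n :=
        (truncNorm_apply n f).trans_le <| sum_le_sum fun p hp => (hf p).trans <| by
          gcongr
          exact Nat.lt_succ_iff.1 (mem_range.1 hp)
    _ = (n + 1) * (M * r ^ n) := by simp
    _ ≤ 2 ^ n * (M * r ^ n) := by gcongr; exact_mod_cast Nat.lt_two_pow_self
    _ = M * (2 * r) ^ n := by ring

lemma truncNorm_eval_le [NormOneClass R] (n : ℕ) (A : Polynomial R⟦X⟧) (Y : R⟦X⟧) :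
    truncNorm R n (A.eval Y) ≤
      ∑ j ∈ range (A.natDegree + 1), truncNorm R n (A.coeff j) * truncNorm R n Y ^ j := by
  have h_one : truncNorm R n (1 : R⟦X⟧) ≤ 1 := by
    simp [truncNorm_apply, sum_range_succ', coeff_one]
  rw [Polynomial.eval_eq_sum_range]
  refine (le_sum_of_subadditive _ (map_zero _).le (map_add_le_add _) _ _).trans ?_
  gcongr with j
  exact (map_mul_le_mul _ _ _).trans <|
    mul_le_mul_of_nonneg_left (map_pow_le_pow' h_one _ _) (apply_nonneg _ _)

end TruncNorm

section CommRing

variable {R : Type*} [CommRing R]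

lemma X_pow_dvd_sub_trunc (N : ℕ) (f : R⟦X⟧) : X ^ N ∣ f - (trunc N f : R⟦X⟧) :=
  X_pow_dvd_iff.2 fun m hm => by simp [coeff_trunc, hm]

lemma coeff_add_mul_of_X_pow_dvd {m n : ℕ} {f g : R⟦X⟧} (hf : X ^ m ∣ f) (hg : X ^ n ∣ g) :
    coeff (m + n) (f * g) = coeff m f * coeff n g := by
  obtain ⟨f, rfl⟩ := hf
  obtain ⟨g, rfl⟩ := hg
  rw [show X ^ m * f * (X ^ n * g) = X ^ (m + n) * (f * g) by ring]
  simp [coeff_X_pow_mul', coeff_zero_eq_constantCoeff]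

lemma coeff_eval_of_X_pow_dvd (A : Polynomial R⟦X⟧) {Y T : R⟦X⟧} {k N : ℕ} (hkN : k < N)
    (hT : X ^ N ∣ T) (hA : A.eval (Y + T) = 0) (hk : X ^ k ∣ A.derivative.eval (Y + T)) :
    coeff (k + N) (A.eval Y) = -(coeff k (A.derivative.eval (Y + T)) * coeff N T) := by
  have hT2 : X ^ (N + N) ∣ A.eval (Y + T) - A.eval Y - A.derivative.eval (Y + T) * T := by
    rw [pow_add]
    exact (mul_dvd_mul hT hT).trans (by simpa [sq] using A.sq_dvd_eval_add_sub_eval_sub_mul Y T)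
  have h := X_pow_dvd_iff.1 hT2 (k + N) (by omega)
  rw [map_sub, map_sub, hA, map_zero, coeff_add_mul_of_X_pow_dvd hk hT] at h
  linear_combination -h

end CommRing

end PowerSeries

namespace ExponentialGrowthC

lemma mul_C {f : ℂ⟦X⟧} (hf : ExponentialGrowthC f) (a : ℂ) : ExponentialGrowthC (f * C a) := by
  obtain ⟨M, r, hM, hr, hfMr⟩ := hf
  refine ⟨M * (‖a‖ + 1), r, by positivity, hr, fun n => ?_⟩
  rw [coeff_mul_C, norm_mul]
  calc ‖coeff n f‖ * ‖a‖ ≤ M * r ^ n * (‖a‖ + 1) := by gcongr <;> linarith [hfMr n]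
    _ = M * (‖a‖ + 1) * r ^ n := by ring

lemma coeff_derivative {A : Polynomial ℂ⟦X⟧} (hA : ∀ j, ExponentialGrowthC (A.coeff j))
    (j : ℕ) :
    ExponentialGrowthC (A.derivative.coeff j) := by
  rw [Polynomial.coeff_derivative, show ((j : ℂ⟦X⟧) + 1) = C ((j : ℂ) + 1) by simp]
  exact (hA (j + 1)).mul_C _

lemma exists_uniform_bound {A : Polynomial ℂ⟦X⟧} (hA : ∀ j, ExponentialGrowthC (A.coeff j)) :
    ∃ M r : ℝ, 0 ≤ M ∧ 1 ≤ r ∧ ∀ j n, ‖coeff n (A.coeff j)‖ ≤ M * r ^ n := by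
  choose M r _ hr hMr using hA
  obtain ⟨⟨M₀, r₀⟩, hle⟩ :=
    (insert (0, 1) ((range (A.natDegree + 1)).image fun j => (M j, r j))).exists_le
  have h₀ := hle _ (mem_insert_self _ _)
  refine ⟨M₀, r₀, h₀.1, h₀.2, fun j n => ?_⟩
  by_cases hj : j ≤ A.natDegree
  · have hj := hle _ <| mem_insert_of_mem <|
      mem_image_of_mem _ (mem_range.2 (Nat.lt_succ_of_le hj))
    calc ‖coeff n (A.coeff j)‖ ≤ M j * r j ^ n := hMr j n
      _ ≤ M₀ * r₀ ^ n :=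
          mul_le_mul hj.1 (pow_le_pow_left₀ (hr j).le hj.2 n) (pow_nonneg (hr j).le n) h₀.1
  · rw [Polynomial.coeff_eq_zero_of_natDegree_lt (not_le.1 hj), map_zero, norm_zero]
    exact mul_nonneg h₀.1 (pow_nonneg (zero_le_one.trans h₀.2) n)

end ExponentialGrowthC

noncomputable def fastSeries : ℂ⟦X⟧ := mk fun n => 2 ^ n !

lemma coeff_fastSeries_sub_trunc (N : ℕ) :
    coeff N (fastSeries - (trunc N fastSeries : ℂ⟦X⟧)) = 2 ^ N ! := by
  simp [fastSeries, coeff_trunc]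

lemma truncNorm_trunc_fastSeries_le (N n : ℕ) :
    truncNorm ℂ n (trunc N fastSeries : ℂ⟦X⟧) ≤ 2 ^ (N - 1)! * 2 ^ n := by
  have h : ∀ p, ‖coeff p (trunc N fastSeries : ℂ⟦X⟧)‖ ≤ 2 ^ (N - 1)! * 1 ^ p := by
    intro p
    rw [Polynomial.coeff_coe, coeff_trunc, one_pow, mul_one]
    split_ifs with hp
    · simpa [fastSeries] using
        pow_le_pow_right₀ one_le_two (Nat.factorial_le (Nat.le_pred_of_lt hp))
    · simp
  simpa using truncNorm_le_of_norm_coeff_le (by positivity) le_rfl h n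

lemma norm_coeff_eval_trunc_fastSeries_le {A : Polynomial ℂ⟦X⟧} {M r : ℝ} (hM : 0 ≤ M)
    (hr : 1 ≤ r) (hA : ∀ j p, ‖coeff p (A.coeff j)‖ ≤ M * r ^ p) (N n : ℕ) :
    ‖coeff n (A.eval (trunc N fastSeries : ℂ⟦X⟧))‖ ≤
      (A.natDegree + 1) * M * (2 ^ (A.natDegree + 1) * r) ^ n *
        2 ^ (A.natDegree * (N - 1)!) := by
  set d := A.natDegree
  set Y : ℂ⟦X⟧ := (trunc N fastSeries : ℂ⟦X⟧)
  set B : ℝ := 2 ^ (N - 1)! * 2 ^ n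
  have hB : 1 ≤ B :=
    one_le_mul_of_one_le_of_one_le (one_le_pow₀ one_le_two) (one_le_pow₀ one_le_two)
  calc ‖coeff n (A.eval Y)‖ ≤ truncNorm ℂ n (A.eval Y) := norm_coeff_le_truncNorm le_rfl _
    _ ≤ ∑ j ∈ range (d + 1), truncNorm ℂ n (A.coeff j) * truncNorm ℂ n Y ^ j :=
        truncNorm_eval_le n A Y
    _ ≤ ∑ j ∈ range (d + 1), M * (2 * r) ^ n * B ^ d := by
        gcongr with j hj
        · exact truncNorm_le_of_norm_coeff_le hM hr (hA j) n
        · exact (pow_le_pow_left₀ (apply_nonneg _ _) (truncNorm_trunc_fastSeries_le N n) j).trans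
            (pow_le_pow_right₀ hB (Nat.lt_succ_iff.1 (mem_range.1 hj)))
    _ = _ := by
        rw [sum_const, card_range, nsmul_eq_mul]
        push_cast
        ring

lemma derivative_eval_fastSeries_eq_zero {A : Polynomial ℂ⟦X⟧}
    (hA : ∀ j, ExponentialGrowthC (A.coeff j)) (h : A.eval fastSeries = 0) :
    A.derivative.eval fastSeries = 0 := by
  by_contra hD
  obtain ⟨M, r, hM, hr, hMr⟩ := ExponentialGrowthC.exists_uniform_bound hA
  set k := (A.derivative.eval fastSeries).order.toNat
  set d := A.natDegree
  have hS : (0 : ℝ) ≤ 2 ^ (d + 1) * r := mul_nonneg (by positivity) (zero_le_one.trans hr)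
  obtain ⟨N, hkN, hN⟩ := ((eventually_gt_atTop k).and
    (eventually_mul_pow_mul_two_pow_lt (norm_pos_iff.2 (coeff_order hD))
      ((d + 1) * M * (2 ^ (d + 1) * r) ^ k) _ hS d)).exists
  set Y : ℂ⟦X⟧ := (trunc N fastSeries : ℂ⟦X⟧)
  have hXY : Y + (fastSeries - Y) = fastSeries := add_sub_cancel _ _
  have h_coeff := coeff_eval_of_X_pow_dvd A hkN (X_pow_dvd_sub_trunc N fastSeries)
    (by rwa [hXY]) (by rw [hXY]; exact X_pow_order_dvd)
  have h_bound := norm_coeff_eval_trunc_fastSeries_le hM hr hMr N (k + N)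
  rw [h_coeff, hXY, coeff_fastSeries_sub_trunc, norm_neg, norm_mul, norm_pow,
    Complex.norm_two, pow_add] at h_bound
  linarith

theorem eq_zero_of_eval_fastSeries_eq_zero {A : Polynomial ℂ⟦X⟧}
    (hA : ∀ j, ExponentialGrowthC (A.coeff j)) (h : A.eval fastSeries = 0) : A = 0 := by
  have : IsAddTorsionFree ℂ⟦X⟧ := .of_module_rat _
  have hD : A.derivative = 0 := by
    by_contra hD
    -- the degree drop, for `termination_by`
    have := Polynomial.natDegree_derivative_lt (Polynomial.derivative_ne_zero.1 hD)
    exact hD (eq_zero_of_eval_fastSeries_eq_zero (ExponentialGrowthC.coeff_derivative hA)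
      (derivative_eval_fastSeries_eq_zero hA h))
  rw [Polynomial.eq_C_of_derivative_eq_zero hD, Polynomial.eval_C] at h
  rw [Polynomial.eq_C_of_derivative_eq_zero hD, h, map_zero]
termination_by A.natDegree

theorem fast_growing_series_stmt15 :
    ∀ A : Polynomial (PowerSeries ℂ), (∀ j, ExponentialGrowthC (A.coeff j)) →
      Polynomial.eval (PowerSeries.mk fun n => (2 : ℂ) ^ n.factorial) A = 0 → A = 0 :=
  fun _ => eq_zero_of_eval_fastSeries_eq_zero
end

section
/- The power series L(z) = Σ_{n≥0} z^{2^n} ∈ ℂ[[z]] is transcendental over the polynomial ring ℂ[z]: there is no nonzero polynomial A(t) ∈ ℂ[z][t] with A(L) = 0. -/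
/-!
Write `σ` for the substitution `z ↦ z ^ m` (`m ≥ 2`), so that `σ f = f - z` for
`f = ∑ z ^ (m ^ n)`. If `A(t)` is a nonzero polynomial over `R[z]` of minimal degree `d` with
`A(f) = 0`, leading coefficient `p` and next coefficient `q`, then `B(t) = (σ A)(t - z)` also
annihilates `f`, because `B(f) = σ (A(f))`. It has degree `d` and leading coefficient `σ p`, so
minimality forces `σ p • A = p • B`. Comparing the coefficients of `t ^ (d - 1)` gives
`σ p * q - p * σ q = -d * z * p * σ p`, whose two sides cannot have the same degree in `z`.
-/

open Polynomial

namespace Polynomial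

theorem nextCoeff_taylor {R : Type*} [CommSemiring R] (f : R[X]) (r : R) :
    (taylor r f).nextCoeff = f.nextCoeff + f.natDegree * r * f.leadingCoeff := by
  obtain hd | hd := Nat.eq_zero_or_pos f.natDegree
  · rw [eq_C_of_natDegree_eq_zero hd, taylor_C]
    simp
  obtain ⟨e, he⟩ : ∃ e, f.natDegree = e + 1 := ⟨_, (Nat.succ_pred_eq_of_pos hd).symm⟩
  have hlin : (hasseDeriv e f).natDegree < 2 := by
    have := natDegree_hasseDeriv_le f e
    omega
  rw [nextCoeff_of_natDegree_pos (by rwa [natDegree_taylor]), nextCoeff_of_natDegree_pos hd,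
    natDegree_taylor, taylor_coeff, he, Nat.add_sub_cancel, eval_eq_sum_range' hlin,
    Finset.sum_range_succ, Finset.sum_range_one, hasseDeriv_coeff, hasseDeriv_coeff, zero_add,
    Nat.choose_self, add_comm 1 e, Nat.choose_succ_self_right, leadingCoeff, he]
  push_cast
  ring

theorem expand_mul_sub_mul_expand_ne {R : Type*} [CommRing R] [IsDomain R] {m : ℕ} (hm : 2 ≤ m)
    {p : R[X]} (hp : p ≠ 0) (q : R[X]) {c : R} (hc : c ≠ 0) :
    expand R m p * q - p * expand R m q ≠ C c * X * p * expand R m p := by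
  have hσp : expand R m p ≠ 0 := (expand_ne_zero (by omega)).2 hp
  have hrhs : (C c * X * p * expand R m p).natDegree = m * p.natDegree + p.natDegree + 1 := by
    rw [natDegree_mul (by simp [hc, hp]) hσp, natDegree_mul (by simp [hc]) hp,
      natDegree_C_mul_X c hc, natDegree_expand]
    ring
  have h₁ : (expand R m p * q).natDegree ≤ m * p.natDegree + q.natDegree := by
    grw [natDegree_mul_le, natDegree_expand, mul_comm]
  have h₂ : (p * expand R m q).natDegree ≤ p.natDegree + m * q.natDegree := by
    grw [natDegree_mul_le, natDegree_expand, mul_comm]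
  intro h
  rcases le_or_gt q.natDegree p.natDegree with hqp | hpq
  · have := natDegree_sub_le_of_le h₁ h₂
    rw [h, hrhs] at this
    have : m * q.natDegree ≤ m * p.natDegree := Nat.mul_le_mul_left m hqp
    omega
  · have hq : q ≠ 0 := by rintro rfl; simp at hpq
    have hlhs : (p * expand R m q).natDegree = p.natDegree + m * q.natDegree := by
      rw [natDegree_mul hp ((expand_ne_zero (by omega)).2 hq), natDegree_expand, mul_comm]
    have hlt : (expand R m p * q).natDegree < (p * expand R m q).natDegree := by
      rw [hlhs]; nlinarith
    have := natDegree_sub_eq_right_of_natDegree_lt hlt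
    rw [h, hrhs, hlhs] at this
    nlinarith

end Polynomial

namespace PowerSeries

variable {R : Type*} [CommRing R]

theorem expand_coe (m : ℕ) (hm : m ≠ 0) (p : R[X]) :
    expand m hm (p : R⟦X⟧) = (Polynomial.expand R m p : R[X]) := by
  ext n
  simp only [coeff_expand, Polynomial.coeff_coe, Polynomial.coeff_expand (Nat.pos_of_ne_zero hm)]

open Classical in
theorem expand_mk_ite_exists_eq_pow {m : ℕ} (hm : 2 ≤ m) :
    expand m (by omega) (mk fun k => if ∃ n : ℕ, k = m ^ n then (1 : R) else 0) =
      (mk fun k => if ∃ n : ℕ, k = m ^ n then (1 : R) else 0) - X := by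
  ext k
  rw [coeff_expand, map_sub, coeff_mk, coeff_mk, coeff_X]
  by_cases hdvd : m ∣ k
  · obtain ⟨j, rfl⟩ := hdvd
    have hpow : (∃ n, j = m ^ n) ↔ ∃ n, m * j = m ^ n := by
      refine ⟨fun ⟨n, hn⟩ => ⟨n + 1, by rw [hn, pow_succ']⟩, fun ⟨n, hn⟩ => ?_⟩
      cases n with
      | zero => have := Nat.eq_one_of_mul_eq_one_right hn; omega
      | succ n => exact ⟨n, Nat.eq_of_mul_eq_mul_left (by omega) (hn.trans (pow_succ' m n))⟩
    have hne : m * j ≠ 1 := fun h => by have := Nat.eq_one_of_mul_eq_one_right h; omega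
    rw [if_pos (dvd_mul_right m j), Nat.mul_div_cancel_left j (by omega), if_neg hne, sub_zero]
    simp only [hpow]
  · have hpow : (∃ n, k = m ^ n) ↔ k = 1 := by
      refine ⟨fun ⟨n, hn⟩ => ?_, fun hk => ⟨0, by rw [hk, pow_zero]⟩⟩
      cases n with
      | zero => rwa [pow_zero] at hn
      | succ n => exact absurd ⟨m ^ n, by rw [hn, pow_succ']⟩ hdvd
    rw [if_neg hdvd]
    simp only [hpow, sub_self]

theorem aeval_taylor_map_expand {m : ℕ} (hm : m ≠ 0) {f : R⟦X⟧} (hf : expand m hm f = f - X)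
    (A : R[X][X]) :
    Polynomial.aeval f (taylor (-Polynomial.X : R[X]) (A.map (Polynomial.expand R m))) =
      expand m hm (Polynomial.aeval f A) := by
  rw [taylor_apply, aeval_def, eval₂_comp, eval₂_map, aeval_def, ← AlgHom.coe_toRingHom,
    hom_eval₂, AlgHom.coe_toRingHom, hf]
  congr 1
  · exact RingHom.ext fun p => (expand_coe m hm p).symm
  · rw [eval₂_add, Polynomial.eval₂_X, Polynomial.eval₂_C, map_neg, ← sub_eq_add_neg]
    exact congrArg (f - ·) Polynomial.coe_X

theorem transcendental_of_expand_eq_sub_X [IsDomain R] [CharZero R] {m : ℕ} (hm : 2 ≤ m)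
    {f : R⟦X⟧} (hf : expand m (by omega) f = f - X) : Transcendental R[X] f := by
  rw [transcendental_iff]
  intro A hA
  induction hd : A.natDegree using Nat.strong_induction_on generalizing A with
  | _ d ih =>
  by_contra hA0
  set σ : R[X] →+* R[X] := (Polynomial.expand R m : R[X] →+* R[X])
  have hσ : Function.Injective σ := expand_injective (by omega)
  set B := taylor (-Polynomial.X : R[X]) (A.map σ)
  have hB : Polynomial.aeval f B = 0 := by rw [aeval_taylor_map_expand _ hf, hA, map_zero]
  have hBdeg : B.degree = A.degree := by
    rw [degree_taylor, degree_map_eq_of_injective hσ]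
  have hBlead : B.leadingCoeff = σ A.leadingCoeff := by
    rw [leadingCoeff_taylor, leadingCoeff_map_of_injective hσ]
  have hBnext : B.nextCoeff = σ A.nextCoeff - (d : R[X]) * Polynomial.X * σ A.leadingCoeff := by
    rw [nextCoeff_taylor, nextCoeff_map hσ, natDegree_map_eq_of_injective hσ,
      leadingCoeff_map_of_injective hσ, hd]
    ring
  have hp : A.leadingCoeff ≠ 0 := leadingCoeff_ne_zero.2 hA0
  have hσp : σ A.leadingCoeff ≠ 0 := (map_ne_zero_iff σ hσ).2 hp
  have hAB : Polynomial.C (σ A.leadingCoeff) * A = Polynomial.C A.leadingCoeff * B := by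
    rw [← sub_eq_zero]
    by_contra hne
    refine hne (ih _ ?_ _ ?_ rfl)
    · refine (natDegree_lt_natDegree hne (degree_sub_lt_left ?_ ?_ ?_)).trans_eq ?_
      · rw [degree_C_mul hσp, degree_C_mul hp, hBdeg]
      · exact mul_ne_zero (C_ne_zero.2 hσp) hA0
      · rw [leadingCoeff_mul, leadingCoeff_mul, leadingCoeff_C, leadingCoeff_C, hBlead, mul_comm]
      · rw [natDegree_C_mul hσp, hd]
    · simp [hA, hB]
  have hd0 : d ≠ 0 := by
    rintro rfl
    rw [eq_C_of_natDegree_eq_zero hd, aeval_C] at hA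
    have : A.coeff 0 = 0 := Polynomial.coe_eq_zero_iff.1 hA
    exact hA0 (by rw [eq_C_of_natDegree_eq_zero hd, this, map_zero])
  refine expand_mul_sub_mul_expand_ne hm hp A.nextCoeff (c := -d) (by simpa using hd0) ?_
  have := congrArg nextCoeff hAB
  rw [nextCoeff_C_mul, nextCoeff_C_mul, hBnext] at this
  simp only [σ, RingHom.coe_coe] at this
  rw [map_neg, map_natCast]
  linear_combination this

end PowerSeries

open Classical in
theorem fast_growing_series_stmt17
    (L : PowerSeries ℂ)
    (hL : L = PowerSeries.mk fun k => if ∃ n : ℕ, k = 2 ^ n then (1 : ℂ) else 0) :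
    ∀ A : Polynomial (Polynomial ℂ),
      Polynomial.eval L
        (A.map (Polynomial.coeToPowerSeries.ringHom : Polynomial ℂ →+* PowerSeries ℂ)) = 0 →
      A = 0 := by
  subst hL
  intro A hA
  rw [eval_map] at hA
  exact transcendental_iff.1
    (PowerSeries.transcendental_of_expand_eq_sub_X le_rfl
      (PowerSeries.expand_mk_ite_exists_eq_pow le_rfl)) A hA
end

section
/- Let K be a field of characteristic 0 endowed with a nonarchimedean absolute value |·|, R a subring of K[[z]], and ρ : ℕ → ℝ_{>0} monotone increasing with C_n = O(ρ(n)) for every C ∈ R. Suppose X ∈ K[[z]] satisfies |X_0| ≥ 1 and, for every fixed λ, m ∈ ℕ, as n → ∞: (i) ρ(n)·|X_{⌊n/2⌋}|^m = o(|X_{n-λ}|), and (ii) ρ(n)·|X_{n-λ-1}|·|X_{⌊(n-1)/2⌋}|^m = o(|X_{n-λ}|). Then X is transcendental over R. -/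
/-!
If `X` were algebraic over `R`, it would be a simple root of some `P` over `R`; let `μ` be the
order of `Y = P'(X) ≠ 0`. Expanding `P` around the truncation `S` of `X` at degree `n / 2` gives
`0 = P(S) + Y (X - S)` up to degree `n`. In degree `n` the term `Y_μ X_{n-μ}` is then, by the
ultrametric inequality and because `|X_k|` is eventually increasing and unbounded, at most
`O(ρ(n) |X_{n/2}|^{deg P} + ρ(n) |X_{n-μ-1}| |X_{(n-1)/2}|^{deg P'})`, which is `o(|X_{n-μ}|)`.
-/

open Asymptotics Filter PowerSeries

instance PowerSeries.charZero {K : Type*} [CommRing K] [CharZero K] : CharZero K⟦X⟧ :=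
  (constantCoeff (R := K)).charZero

theorem Polynomial.coeff_derivative_mem {S : Type*} [CommRing S] (R : Subring S)
    {P : Polynomial S} (hP : ∀ j, P.coeff j ∈ R) (j : ℕ) : P.derivative.coeff j ∈ R := by
  rw [Polynomial.coeff_derivative]
  exact R.mul_mem (hP _) (R.add_mem (natCast_mem R j) R.one_mem)

/-- Pass to the derivative as long as it still vanishes at `x`; the degree drops each time. -/
theorem exists_eval_eq_zero_and_eval_derivative_ne_zero {S : Type*} [CommRing S] [IsDomain S]
    [IsAddTorsionFree S] (R : Subring S) (x : S) (P : Polynomial S) (hPR : ∀ j, P.coeff j ∈ R)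
    (hP0 : P ≠ 0) (hPx : P.eval x = 0) :
    ∃ Q : Polynomial S, (∀ j, Q.coeff j ∈ R) ∧ Q.eval x = 0 ∧ Q.derivative.eval x ≠ 0 := by
  induction hd : P.natDegree using Nat.strong_induction_on generalizing P with
  | _ d ih =>
  by_cases hP'x : P.derivative.eval x = 0
  · have hdeg : P.natDegree ≠ 0 := by
      intro h
      rw [Polynomial.eq_C_of_natDegree_eq_zero h, Polynomial.eval_C] at hPx
      exact hP0 (by rw [Polynomial.eq_C_of_natDegree_eq_zero h, hPx, map_zero])
    exact ih _ (hd ▸ Polynomial.natDegree_derivative_lt hdeg) P.derivative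
      (P.coeff_derivative_mem R hPR) (Polynomial.derivative_ne_zero.mpr hdeg) hP'x rfl
  · exact ⟨P, hPR, hPx, hP'x⟩

namespace PowerSeries

variable {R : Type*} [CommRing R]

/-- `f` minus its truncation at degree `t`; indices are not shifted. -/
noncomputable def tail (t : ℕ) (f : R⟦X⟧) : R⟦X⟧ :=
  mk fun k => if t < k then coeff k f else 0

theorem coeff_tail (t k : ℕ) (f : R⟦X⟧) :
    coeff k (tail t f) = if t < k then coeff k f else 0 :=
  coeff_mk _ _

theorem X_pow_dvd_tail (t : ℕ) (f : R⟦X⟧) : X ^ (t + 1) ∣ tail t f :=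
  X_pow_dvd_iff.mpr fun m hm => by rw [coeff_tail, if_neg (by omega)]

/-- Taylor expansion to first order: the error term is a multiple of `(tail t f) ^ 2`,
which vanishes up to degree `2 * t + 1`. -/
theorem coeff_eval_sub_tail (P : Polynomial R⟦X⟧) (f : R⟦X⟧) {t n : ℕ} (hn : n ≤ 2 * t + 1) :
    coeff n (P.eval (f - tail t f)) =
      coeff n (P.eval f) - coeff n (P.derivative.eval f * tail t f) := by
  obtain ⟨q, hq⟩ := P.binomExpansion f (-tail t f)
  have hsq : X ^ (2 * t + 2) ∣ q * (-tail t f) ^ 2 := by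
    rw [neg_sq, show 2 * t + 2 = (t + 1) * 2 by ring, pow_mul]
    exact dvd_mul_of_dvd_right (pow_dvd_pow_of_dvd (X_pow_dvd_tail t f) 2) q
  rw [sub_eq_add_neg, hq, map_add, map_add, X_pow_dvd_iff.mp hsq n (by omega), add_zero,
    mul_neg, map_neg, ← sub_eq_add_neg]

end PowerSeries

theorem isLittleO_of_mul_left_of_le {α : Type*} {l : Filter α} {ρ f g : α → ℝ} {c : ℝ}
    (hc : 0 < c) (hρ : ∀ x, c ≤ ρ x) (h : (fun x => ρ x * f x) =o[l] g) : f =o[l] g := by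
  refine (IsBigO.of_bound c⁻¹ (Eventually.of_forall fun x => ?_)).trans_isLittleO h
  rw [norm_mul, Real.norm_of_nonneg (hc.le.trans (hρ x)), ← mul_assoc]
  exact le_mul_of_one_le_left (norm_nonneg _) ((one_le_inv_mul₀ hc).mpr (hρ x))

theorem Filter.Tendsto.eventually_isMaxOn_Iic {a : ℕ → ℝ} (htend : Tendsto a atTop atTop)
    (hstep : ∀ᶠ n in atTop, a n ≤ a (n + 1)) : ∀ᶠ m in atTop, IsMaxOn a (Set.Iic m) m := by
  obtain ⟨n₀, hn₀⟩ := eventually_atTop.mp hstep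
  have hmono : MonotoneOn a (Set.Ici n₀) :=
    monotoneOn_of_le_add_one Set.ordConnected_Ici fun n _ hn _ => hn₀ n hn
  filter_upwards [eventually_ge_atTop n₀,
    htend.eventually_ge_atTop ((Finset.range (n₀ + 1)).sup' Finset.nonempty_range_add_one a)]
    with m hm₀ hm
  refine isMaxOn_iff.mpr fun k hk => ?_
  rcases le_total k n₀ with hkn₀ | hkn₀
  · exact (Finset.le_sup' a (Finset.mem_range_succ_iff.mpr hkn₀)).trans hm
  · exact hmono hkn₀ hm₀ hk

section Ultrametric

variable {K : Type*} [CommRing K] {v : AbsoluteValue K ℝ}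

theorem IsNonarchimedean.apply_sum_le_of_forall_le (hv : IsNonarchimedean v) {ι : Type*}
    {s : Finset ι} {f : ι → K} {b : ℝ} (hb : 0 ≤ b) (h : ∀ i ∈ s, v (f i) ≤ b) :
    v (∑ i ∈ s, f i) ≤ b := by
  rcases s.eq_empty_or_nonempty with rfl | hs
  · simpa using hb
  obtain ⟨i, hi, hle⟩ := hv.finset_image_add_of_nonempty f hs
  exact hle.trans (h i hi)

theorem coeff_pow_le [Nontrivial K] (hv : IsNonarchimedean v) {f : K⟦X⟧} {M : ℝ} (hM : 1 ≤ M)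
    {r : ℕ} (hf : ∀ k ≤ r, v (coeff k f) ≤ M) (j : ℕ) : v (coeff r (f ^ j)) ≤ M ^ j := by
  have hM0 : 0 ≤ M := zero_le_one.trans hM
  induction j generalizing r with
  | zero =>
    rw [pow_zero, pow_zero, coeff_one]
    split_ifs <;> simp
  | succ j ih =>
    rw [pow_succ, coeff_mul, pow_succ]
    refine hv.apply_sum_le_of_forall_le (by positivity) fun p hp => ?_
    have hpr := Finset.HasAntidiagonal.mem_antidiagonal.mp hp
    rw [v.map_mul]
    exact mul_le_mul (ih fun k hk => hf k (by omega)) (hf p.2 (by omega)) (v.nonneg _)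
      (by positivity)

theorem coeff_eval_le [Nontrivial K] (hv : IsNonarchimedean v) {ρ : ℕ → ℝ} (hρ : Monotone ρ)
    {c : ℝ} (hc : 0 ≤ c) {P : Polynomial K⟦X⟧} (hP : ∀ j i, v (coeff i (P.coeff j)) ≤ c * ρ i)
    {f : K⟦X⟧} {M : ℝ} (hM : 1 ≤ M) {r : ℕ} (hf : ∀ k ≤ r, v (coeff k f) ≤ M) :
    v (coeff r (P.eval f)) ≤ c * ρ r * M ^ P.natDegree := by
  have hcρ : 0 ≤ c * ρ r := (v.nonneg _).trans (hP 0 r)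
  have hbound : 0 ≤ c * ρ r * M ^ P.natDegree := mul_nonneg hcρ (pow_nonneg (by linarith) _)
  rw [Polynomial.eval_eq_sum_range, map_sum]
  refine hv.apply_sum_le_of_forall_le hbound fun j hj => ?_
  rw [coeff_mul]
  refine hv.apply_sum_le_of_forall_le hbound fun p hp => ?_
  have hpr := Finset.HasAntidiagonal.mem_antidiagonal.mp hp
  rw [v.map_mul]
  exact mul_le_mul ((hP j p.1).trans (mul_le_mul_of_nonneg_left (hρ (by omega)) hc))
    ((coeff_pow_le hv hM (fun k hk => hf k (by omega)) j).trans
      (pow_le_pow_right₀ hM (Finset.mem_range_succ_iff.mp hj)))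
    (v.nonneg _) hcρ

theorem exists_coeff_le_mul {ρ : ℕ → ℝ} (hρ : ∀ n, 0 < ρ n) (P : Polynomial K⟦X⟧)
    (hP : ∀ j, (fun i => v (coeff i (P.coeff j))) =O[atTop] ρ) :
    ∃ c, 0 ≤ c ∧ ∀ j i, v (coeff i (P.coeff j)) ≤ c * ρ i := by
  obtain ⟨C, hC⟩ := (isBigO_nat_atTop_iff fun n hn => absurd hn (hρ n).ne').mp
    (IsBigO.sum fun j (_ : j ∈ P.support) => hP j)
  refine ⟨max C 0, le_max_right _ _, fun j i => ?_⟩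
  by_cases hj : j ∈ P.support
  · have hsum := hC i
    rw [Finset.sum_apply, Real.norm_of_nonneg (Finset.sum_nonneg fun _ _ => v.nonneg _),
      Real.norm_of_nonneg (hρ i).le] at hsum
    exact ((Finset.single_le_sum (fun _ _ => v.nonneg _) hj).trans hsum).trans
      (mul_le_mul_of_nonneg_right (le_max_left _ _) (hρ i).le)
  · rw [Polynomial.notMem_support_iff.mp hj, map_zero, v.map_zero]
    exact mul_nonneg (le_max_right _ _) (hρ i).le

theorem coeff_mul_tail_sub_le (hv : IsNonarchimedean v) {g f : K⟦X⟧} {μ t n : ℕ}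
    (hg : ∀ a < μ, coeff a g = 0) (htn : t + μ < n) {A B : ℝ} (hA : 0 ≤ A) (hB : 0 ≤ B)
    (hgA : ∀ a, μ < a → a < n - t → v (coeff a g) ≤ A)
    (hfB : ∀ b, t < b → b < n - μ → v (coeff b f) ≤ B) :
    v (coeff n (g * tail t f) - coeff μ g * coeff (n - μ) f) ≤ A * B := by
  have hmem : (μ, n - μ) ∈ Finset.HasAntidiagonal.antidiagonal n :=
    Finset.HasAntidiagonal.mem_antidiagonal.mpr (by dsimp only; omega)
  rw [coeff_mul, ← Finset.add_sum_erase _ _ hmem, coeff_tail, if_pos (by omega),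
    add_sub_cancel_left]
  refine hv.apply_sum_le_of_forall_le (mul_nonneg hA hB) fun p hp => ?_
  obtain ⟨hne, hp⟩ := Finset.mem_erase.mp hp
  have hpn := Finset.HasAntidiagonal.mem_antidiagonal.mp hp
  rw [coeff_tail, v.map_mul]
  split_ifs with htp
  · rcases lt_or_gt_of_ne (show p.1 ≠ μ from fun h => hne (Prod.ext h (by simp only; omega)))
      with h | h
    · rw [hg _ h, v.map_zero, zero_mul]
      exact mul_nonneg hA hB
    · exact mul_le_mul (hgA _ h (by omega)) (hfB _ htp (by omega)) (v.nonneg _) hA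
  · rw [v.map_zero, mul_zero]
    exact mul_nonneg hA hB

end Ultrametric

section Growth

variable {K : Type*} [CommRing K] {v : AbsoluteValue K ℝ} {ρ : ℕ → ℝ} {f : K⟦X⟧}

theorem eventually_isMaxOn_coeff (hρpos : ∀ n, 0 < ρ n) (hρmono : Monotone ρ)
    (h₁ : ρ =o[atTop] fun n => v (coeff n f))
    (h₂ : (fun n => ρ n * v (coeff (n - 1) f)) =o[atTop] fun n => v (coeff n f)) :
    ∀ᶠ m in atTop, 1 ≤ v (coeff m f) ∧ IsMaxOn (fun k => v (coeff k f)) (Set.Iic m) m := by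
  have hρ0 : ∀ n, ρ 0 ≤ ρ n := fun n => hρmono n.zero_le
  have htend : Tendsto (fun n => v (coeff n f)) atTop atTop := by
    have h := (isLittleO_one_left_iff ℝ).mp
      (isLittleO_of_mul_left_of_le (f := fun _ => (1 : ℝ)) (hρpos 0) hρ0 (by simpa using h₁))
    simpa only [Real.norm_of_nonneg (v.nonneg _)] using h
  have hstep : ∀ᶠ n in atTop, v (coeff n f) ≤ v (coeff (n + 1) f) := by
    filter_upwards [(tendsto_add_atTop_nat 1).eventually
      ((isLittleO_of_mul_left_of_le (hρpos 0) hρ0 h₂).bound zero_lt_one)] with n hn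
    simpa only [Nat.add_sub_cancel, Real.norm_of_nonneg (v.nonneg _), one_mul] using hn
  exact (htend.eventually_ge_atTop 1).and (htend.eventually_isMaxOn_Iic hstep)

variable [Nontrivial K] (hv : IsNonarchimedean v) (hρmono : Monotone ρ)
include hv hρmono

/-- The coefficient of degree `n` of `P(f) = 0`, expanded around the truncation of `f` at
degree `n / 2`. -/
theorem coeff_order_mul_coeff_le {P : Polynomial K⟦X⟧} (hPf : P.eval f = 0) {c c' : ℝ}
    (hc : 0 ≤ c) (hc' : 0 ≤ c') (hP : ∀ j i, v (coeff i (P.coeff j)) ≤ c * ρ i)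
    (hP' : ∀ j i, v (coeff i (P.derivative.coeff j)) ≤ c' * ρ i) {μ n : ℕ}
    (hμ : ∀ a < μ, coeff a (P.derivative.eval f) = 0) (hn : n / 2 + μ < n)
    (hhalf : 1 ≤ v (coeff (n / 2) f) ∧ IsMaxOn (fun k => v (coeff k f)) (Set.Iic (n / 2)) (n / 2))
    (hhalf' : 1 ≤ v (coeff ((n - 1) / 2) f) ∧
      IsMaxOn (fun k => v (coeff k f)) (Set.Iic ((n - 1) / 2)) ((n - 1) / 2))
    (hprev : IsMaxOn (fun k => v (coeff k f)) (Set.Iic (n - μ - 1)) (n - μ - 1)) :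
    v (coeff μ (P.derivative.eval f)) * v (coeff (n - μ) f) ≤
      c * (ρ n * v (coeff (n / 2) f) ^ P.natDegree) +
        c' * (ρ n * v (coeff (n - μ - 1) f) *
          v (coeff ((n - 1) / 2) f) ^ P.derivative.natDegree) := by
  set Y := P.derivative.eval f
  set T := tail (n / 2) f
  have hkey : coeff n (P.eval (f - T)) = -coeff n (Y * T) := by
    rw [coeff_eval_sub_tail P f (by omega), hPf, map_zero, zero_sub]
  have htrunc : v (coeff n (P.eval (f - T))) ≤ c * (ρ n * v (coeff (n / 2) f) ^ P.natDegree) := by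
    rw [← mul_assoc]
    refine coeff_eval_le hv hρmono hc hP hhalf.1 fun k _ => ?_
    rw [map_sub, coeff_tail]
    split_ifs with hk
    · rw [sub_self, v.map_zero]
      exact zero_le_one.trans hhalf.1
    · rw [sub_zero]
      exact isMaxOn_iff.mp hhalf.2 k (Set.mem_Iic.mpr (by omega))
  have hY : ∀ a, μ < a → a < n - n / 2 →
      v (coeff a Y) ≤ c' * ρ n * v (coeff ((n - 1) / 2) f) ^ P.derivative.natDegree := by
    intro a _ ha
    refine (coeff_eval_le hv hρmono hc' hP' hhalf'.1 fun k hk =>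
      isMaxOn_iff.mp hhalf'.2 k (Set.mem_Iic.mpr (by omega))).trans ?_
    gcongr
    exact hρmono (by omega)
  have hrest : v (coeff n (Y * T) - coeff μ Y * coeff (n - μ) f) ≤
      c' * ρ n * v (coeff ((n - 1) / 2) f) ^ P.derivative.natDegree * v (coeff (n - μ - 1) f) :=
    coeff_mul_tail_sub_le hv hμ hn
      (mul_nonneg ((v.nonneg _).trans (hP' 0 n)) (pow_nonneg (v.nonneg _) _))
      (v.nonneg _) hY fun b _ hb => isMaxOn_iff.mp hprev b (Set.mem_Iic.mpr (by omega))
  calc v (coeff μ Y) * v (coeff (n - μ) f)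
      = v (coeff n (P.eval (f - T)) + (coeff n (Y * T) - coeff μ Y * coeff (n - μ) f)) := by
        rw [hkey, ← v.map_mul, ← v.map_neg]
        congr 1
        ring
    _ ≤ v (coeff n (P.eval (f - T))) + v (coeff n (Y * T) - coeff μ Y * coeff (n - μ) f) :=
        v.add_le _ _
    _ ≤ _ := by linarith

theorem eval_derivative_eq_zero_of_eval_eq_zero_s19 (hρpos : ∀ n, 0 < ρ n) (R : Subring K⟦X⟧)
    (hR : ∀ C ∈ R, (fun n => v (coeff n C)) =O[atTop] ρ)
    (hcond1 : ∀ lam m : ℕ,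
      (fun n => ρ n * v (coeff (n / 2) f) ^ m) =o[atTop] fun n => v (coeff (n - lam) f))
    (hcond2 : ∀ lam m : ℕ,
      (fun n => ρ n * v (coeff (n - lam - 1) f) * v (coeff ((n - 1) / 2) f) ^ m)
        =o[atTop] fun n => v (coeff (n - lam) f))
    {P : Polynomial K⟦X⟧} (hPR : ∀ j, P.coeff j ∈ R) (hPf : P.eval f = 0) :
    P.derivative.eval f = 0 := by
  by_contra hY
  set μ := (P.derivative.eval f).order.toNat
  have hYμ : 0 < v (coeff μ (P.derivative.eval f)) := v.pos (coeff_order hY)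
  obtain ⟨c, hc, hP⟩ := exists_coeff_le_mul hρpos P fun j => hR _ (hPR j)
  obtain ⟨c', hc', hP'⟩ := exists_coeff_le_mul hρpos P.derivative fun j =>
    hR _ (P.coeff_derivative_mem R hPR j)
  obtain ⟨m₀, hm₀⟩ := eventually_atTop.mp <|
    eventually_isMaxOn_coeff hρpos hρmono (by simpa using hcond1 0 0) (by simpa using hcond2 0 0)
  have hlittle : (fun n => v (coeff μ (P.derivative.eval f)) * v (coeff (n - μ) f))
      =o[atTop] fun n => v (coeff (n - μ) f) := by
    refine IsBigO.trans_isLittleO (IsBigO.of_bound 1 ?_)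
      (((hcond1 μ P.natDegree).const_mul_left c).add
        ((hcond2 μ P.derivative.natDegree).const_mul_left c'))
    filter_upwards [eventually_ge_atTop (2 * m₀ + 2 * μ + 2)] with n hn
    have hest := coeff_order_mul_coeff_le hv hρmono hPf hc hc' hP hP' (n := n)
      (fun a ha => coeff_of_lt_order_toNat a ha) (by omega) (hm₀ _ (by omega))
      (hm₀ _ (by omega)) (hm₀ _ (by omega)).2
    have hnonneg : 0 ≤ v (coeff μ (P.derivative.eval f)) * v (coeff (n - μ) f) :=
      mul_nonneg (v.nonneg _) (v.nonneg _)
    rw [one_mul, Real.norm_of_nonneg hnonneg, Real.norm_of_nonneg (hnonneg.trans hest)]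
    exact hest
  refine isLittleO_irrefl ?_ ((isLittleO_const_mul_left_iff hYμ.ne').mp hlittle)
  refine Eventually.frequently ?_
  filter_upwards [eventually_ge_atTop (m₀ + μ)] with n hn
  exact (zero_lt_one.trans_le (hm₀ (n - μ) (by omega)).1).ne'

end Growth

theorem fast_growing_series_stmt19_general {K : Type*} [Field K] [CharZero K]
    (v : AbsoluteValue K ℝ) (hna : ∀ a b : K, v (a + b) ≤ max (v a) (v b))
    (R : Subring (PowerSeries K)) (X : PowerSeries K)
    (ρ : ℕ → ℝ) (hρpos : ∀ n, 0 < ρ n) (hρmono : Monotone ρ)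
    (hR : ∀ C ∈ R, (fun n => v (PowerSeries.coeff (R := K) n C)) =O[atTop] ρ)
    (hcond1 : ∀ lam m : ℕ,
      (fun n => ρ n * v (PowerSeries.coeff (R := K) (n / 2) X) ^ m)
        =o[atTop] fun n => v (PowerSeries.coeff (R := K) (n - lam) X))
    (hcond2 : ∀ lam m : ℕ,
      (fun n => ρ n * v (PowerSeries.coeff (R := K) (n - lam - 1) X) *
          v (PowerSeries.coeff (R := K) ((n - 1) / 2) X) ^ m)
        =o[atTop] fun n => v (PowerSeries.coeff (R := K) (n - lam) X)) :
    ∀ A : Polynomial (PowerSeries K), (∀ j, A.coeff j ∈ R) →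
      Polynomial.eval X A = 0 → A = 0 := by
  intro A hAR hA
  by_contra hA0
  obtain ⟨P, hPR, hPX, hP'X⟩ :=
    exists_eval_eq_zero_and_eval_derivative_ne_zero R X A hAR hA0 hA
  exact hP'X (eval_derivative_eq_zero_of_eval_eq_zero_s19 hna hρmono hρpos R hR hcond1 hcond2 hPR hPX)

theorem fast_growing_series_stmt19 {K : Type*} [Field K] [CharZero K]
    (v : AbsoluteValue K ℝ) (hna : ∀ a b : K, v (a + b) ≤ max (v a) (v b))
    (R : Subring (PowerSeries K)) (X : PowerSeries K)
    (ρ : ℕ → ℝ) (hρpos : ∀ n, 0 < ρ n) (hρmono : Monotone ρ)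
    (hR : ∀ C ∈ R, (fun n => v (PowerSeries.coeff (R := K) n C)) =O[atTop] ρ)
    (hX0 : 1 ≤ v (PowerSeries.coeff (R := K) 0 X))
    (hcond1 : ∀ lam m : ℕ,
      (fun n => ρ n * v (PowerSeries.coeff (R := K) (n / 2) X) ^ m)
        =o[atTop] fun n => v (PowerSeries.coeff (R := K) (n - lam) X))
    (hcond2 : ∀ lam m : ℕ,
      (fun n => ρ n * v (PowerSeries.coeff (R := K) (n - lam - 1) X) *
          v (PowerSeries.coeff (R := K) ((n - 1) / 2) X) ^ m)
        =o[atTop] fun n => v (PowerSeries.coeff (R := K) (n - lam) X)) :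
    ∀ A : Polynomial (PowerSeries K), (∀ j, A.coeff j ∈ R) →
      Polynomial.eval X A = 0 → A = 0 :=
  fast_growing_series_stmt19_general v hna R X ρ hρpos hρmono hR hcond1 hcond2
end
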